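/- arXiv:2504.10314 — 2 statements merged into one kernel-verified Lean document; each statement's English description precedes it below -/
import Mathlib

section
/- Let 𝐂 be an abstract clone and D a category with chosen finite products. Then there is an equivalence of categories between: (i) the category whose objects are (not necessarily strict) finite-product-preserving functors Cart(𝐂) → D and whose morphisms are natural transformations, and (ii) the category whose objects are clone morphisms 𝐂 → Cl(D) and whose morphisms are transformations of clone morphisms. The equivalence sends a clone morphism f : 𝐂 → Cl(D) to the functor [A₁,…,Aₙ] ↦ fA₁×…×fAₙ, (t₁,…,tₘ) ↦ ⟨f(t₁),…,f(tₘ)⟩, and a transformation η to the natural transformation with components η_{A₁}×…×η_{Aₙ}. -/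
open CategoryTheory

universe u v u' v'

/-- A category with chosen finite products: a chosen terminal object and chosen binary
products. -/
structure ChosenFP (D : Type u') [Category.{v'} D] : Type (max u' v') where
  unit : D
  toUnit : ∀ X : D, X ⟶ unit
  toUnit_unique : ∀ {X : D} (f : X ⟶ unit), f = toUnit X
  prod : D → D → D
  fst : ∀ X Y : D, prod X Y ⟶ X
  snd : ∀ X Y : D, prod X Y ⟶ Y
  lift : ∀ {X Y Z : D}, (Z ⟶ X) → (Z ⟶ Y) → (Z ⟶ prod X Y)
  lift_fst : ∀ {X Y Z : D} (f : Z ⟶ X) (g : Z ⟶ Y), lift f g ≫ fst X Y = f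
  lift_snd : ∀ {X Y Z : D} (f : Z ⟶ X) (g : Z ⟶ Y), lift f g ≫ snd X Y = g
  lift_unique : ∀ {X Y Z : D} (m : Z ⟶ prod X Y), m = lift (m ≫ fst X Y) (m ≫ snd X Y)

namespace ChosenFP

variable {D : Type u'} [Category.{v'} D] (P : ChosenFP D)

theorem comp_lift {X Y Z W : D} (h : W ⟶ Z) (f : Z ⟶ X) (g : Z ⟶ Y) :
    h ≫ P.lift f g = P.lift (h ≫ f) (h ≫ g) := by
  rw [P.lift_unique (h ≫ P.lift f g)]
  simp [Category.assoc, P.lift_fst, P.lift_snd]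

theorem lift_fst_snd {X Y : D} : P.lift (P.fst X Y) (P.snd X Y) = 𝟙 (P.prod X Y) := by
  conv_rhs => rw [P.lift_unique (𝟙 (P.prod X Y))]
  simp

/-- The left-bracketed `n`-ary chosen product `(…(1 × A₁) × …) × Aₙ`. -/
def nprod : ∀ {n : ℕ}, (Fin n → D) → D
  | 0, _ => P.unit
  | n + 1, Γ => P.prod (nprod (fun i : Fin n => Γ i.castSucc)) (Γ (Fin.last n))

/-- The projections of the `n`-ary chosen product. -/
def nproj : ∀ {n : ℕ} (Γ : Fin n → D) (j : Fin n), P.nprod Γ ⟶ Γ j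
  | 0, _, j => j.elim0
  | n + 1, Γ, j =>
      Fin.lastCases (motive := fun j => P.nprod Γ ⟶ Γ j)
        (P.snd _ _)
        (fun i => P.fst _ _ ≫ nproj (fun i : Fin n => Γ i.castSucc) i) j

/-- Tupling into the `n`-ary chosen product. -/
def nlift : ∀ {n : ℕ} {Γ : Fin n → D} {X : D}, (∀ i, X ⟶ Γ i) → (X ⟶ P.nprod Γ)
  | 0, _, X, _ => P.toUnit X
  | n + 1, _, _, f => P.lift (nlift (fun i => f i.castSucc)) (f (Fin.last n))

theorem nlift_nproj : ∀ {n : ℕ} {Γ : Fin n → D} {X : D} (f : ∀ i, X ⟶ Γ i) (j : Fin n),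
    P.nlift f ≫ P.nproj Γ j = f j
  | 0, _, _, _, j => j.elim0
  | n + 1, Γ, X, f, j => by
      induction j using Fin.lastCases with
      | last =>
          have h : P.nproj Γ (Fin.last n) = P.snd _ _ :=
            Fin.lastCases_last (motive := fun j => P.nprod Γ ⟶ Γ j)
          rw [h]
          exact P.lift_snd _ _
      | cast i =>
          have h : P.nproj Γ i.castSucc
              = P.fst _ _ ≫ P.nproj (fun i : Fin n => Γ i.castSucc) i :=
            Fin.lastCases_castSucc (motive := fun j => P.nprod Γ ⟶ Γ j) i
          rw [h]
          exact (Category.assoc _ _ _).symm.trans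
            ((congrArg (· ≫ P.nproj (fun i : Fin n => Γ i.castSucc) i)
              (P.lift_fst _ _)).trans (nlift_nproj _ i))

theorem comp_nlift : ∀ {n : ℕ} {Γ : Fin n → D} {X Y : D} (h : Y ⟶ X) (f : ∀ i, X ⟶ Γ i),
    h ≫ P.nlift f = P.nlift (fun i => h ≫ f i)
  | 0, _, _, _, h, f => P.toUnit_unique _
  | n + 1, Γ, X, Y, h, f => by
      exact (P.comp_lift h _ _).trans (congrArg (P.lift · _) (comp_nlift h _))

theorem nlift_nproj_eta : ∀ {n : ℕ} (Γ : Fin n → D), P.nlift (P.nproj Γ) = 𝟙 (P.nprod Γ)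
  | 0, _ => (P.toUnit_unique _).symm.trans rfl
  | n + 1, Γ => by
      have h1 : (P.nlift fun i : Fin n => P.nproj Γ i.castSucc)
          = P.fst (P.nprod fun i : Fin n => Γ i.castSucc) (Γ (Fin.last n)) := by
        have : (fun i : Fin n => P.nproj Γ i.castSucc)
            = fun i : Fin n => P.fst _ _ ≫ P.nproj (fun i : Fin n => Γ i.castSucc) i := by
          funext i
          exact Fin.lastCases_castSucc (motive := fun j => P.nprod Γ ⟶ Γ j) i
        rw [this]
        exact (P.comp_nlift _ _).symm.trans
          ((congrArg (_ ≫ ·) (nlift_nproj_eta _)).trans (Category.comp_id _))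
      have h2 : P.nproj Γ (Fin.last n)
          = P.snd (P.nprod fun i : Fin n => Γ i.castSucc) (Γ (Fin.last n)) := by
        exact Fin.lastCases_last (motive := fun j => P.nprod Γ ⟶ Γ j)
      show P.lift _ _ = _
      rw [h1, h2]
      exact P.lift_fst_snd

end ChosenFP

/-- An abstract (multi-sorted) clone on a type `Obj` of objects. -/
structure CloneStruct (Obj : Type u) : Type (max u (v + 1)) where
  Hom : ∀ {n : ℕ}, (Fin n → Obj) → Obj → Type v
  pr : ∀ {n : ℕ} (Γ : Fin n → Obj) (j : Fin n), Hom Γ (Γ j)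
  subst : ∀ {m n : ℕ} {Δ : Fin m → Obj} {B : Obj}, Hom Δ B →
      ∀ {Γ : Fin n → Obj}, (∀ i, Hom Γ (Δ i)) → Hom Γ B
  pr_subst : ∀ {m n : ℕ} (Δ : Fin m → Obj) (j : Fin m) {Γ : Fin n → Obj}
      (u : ∀ i, Hom Γ (Δ i)), subst (pr Δ j) u = u j
  subst_pr : ∀ {m : ℕ} {Δ : Fin m → Obj} {B : Obj} (t : Hom Δ B), subst t (pr Δ) = t
  subst_assoc : ∀ {m n p : ℕ} {Δ : Fin m → Obj} {B : Obj} (t : Hom Δ B) {Γ : Fin n → Obj}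
      (u : ∀ i, Hom Γ (Δ i)) {Λ : Fin p → Obj} (v : ∀ i, Hom Λ (Γ i)),
      subst (subst t u) v = subst t (fun i => subst (u i) v)

/-- A clone morphism. -/
structure CloneHom {OC : Type u} {OD : Type u'} (C : CloneStruct.{u, v} OC)
    (D : CloneStruct.{u', v'} OD) : Type (max u v u' v') where
  obj : OC → OD
  map : ∀ {n : ℕ} {Γ : Fin n → OC} {B : OC}, C.Hom Γ B → D.Hom (fun i => obj (Γ i)) (obj B)
  map_pr : ∀ {n : ℕ} (Γ : Fin n → OC) (j : Fin n),
      map (C.pr Γ j) = D.pr (fun i => obj (Γ i)) j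
  map_subst : ∀ {m n : ℕ} {Δ : Fin m → OC} {B : OC} (t : C.Hom Δ B) {Γ : Fin n → OC}
      (u : ∀ i, C.Hom Γ (Δ i)),
      map (C.subst t u) = D.subst (map t) (fun i => map (u i))

universe u'' v''

/-- Composition of clone morphisms. -/
def CloneHom.comp {OC : Type u} {OD : Type u'} {OE : Type u''} {C : CloneStruct.{u, v} OC}
    {D : CloneStruct.{u', v'} OD} {E : CloneStruct.{u'', v''} OE}
    (f : CloneHom C D) (g : CloneHom D E) : CloneHom C E where
  obj A := g.obj (f.obj A)
  map := fun t => g.map (f.map t)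
  map_pr := by
    intro n Γ j
    show g.map (f.map (C.pr Γ j)) = _
    rw [f.map_pr, g.map_pr]
  map_subst := by
    intro m n Δ B t Γ u
    show g.map (f.map (C.subst t u)) = _
    rw [f.map_subst, g.map_subst]

/-- The underlying clone of a category with chosen finite products:
multimaps `Γ → B` are morphisms `A₁ × ⋯ × Aₙ ⟶ B`, projections are the product projections,
and substitution is `t[u₁,…,uₘ] = ⟨u₁,…,uₘ⟩ ≫ t`. -/
def ChosenFP.clOf {D : Type u'} [Category.{v'} D] (P : ChosenFP D) : CloneStruct.{u', v'} D where
  Hom Γ B := P.nprod Γ ⟶ B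
  pr := fun Γ j => P.nproj Γ j
  subst := fun {m n Δ B} t {Γ} u => P.nlift u ≫ t
  pr_subst := by
    intro m n Δ j Γ u
    exact P.nlift_nproj u j
  subst_pr := by
    intro m Δ B t
    show P.nlift (P.nproj Δ) ≫ t = t
    rw [P.nlift_nproj_eta, Category.id_comp]
  subst_assoc := by
    intro m n p Δ B t Γ u Λ v
    show P.nlift v ≫ P.nlift u ≫ t = P.nlift (fun i => P.nlift v ≫ u i) ≫ t
    rw [← Category.assoc, P.comp_nlift]

namespace CloneStruct

variable {OC : Type u} (C : CloneStruct.{u, v} OC)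

/-- Transport of a multimap along an equality of targets. -/
def cstT {n : ℕ} {Γ : Fin n → OC} {B B' : OC} (h : B = B') (t : C.Hom Γ B) : C.Hom Γ B' :=
  _root_.cast (congrArg (fun X => C.Hom Γ X) h) t

@[simp] theorem cstT_rfl {n : ℕ} {Γ : Fin n → OC} {B : OC} (t : C.Hom Γ B) :
    C.cstT rfl t = t := rfl

theorem cstT_cstT {n : ℕ} {Γ : Fin n → OC} {B B' : OC} (h : B = B') (t : C.Hom Γ B) :
    C.cstT h.symm (C.cstT h t) = t := by cases h; rfl

theorem subst_cstT {m n : ℕ} {Δ : Fin m → OC} {B B' : OC} (h : B = B') (t : C.Hom Δ B)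
    {Γ : Fin n → OC} (u : ∀ i, C.Hom Γ (Δ i)) :
    C.subst (C.cstT h t) u = C.cstT h (C.subst t u) := by cases h; rfl

end CloneStruct

/-- The objects of the cartesian category freely generated by a clone `C`: finite lists of
objects of `C` (encoded as pairs of a length and a tuple). -/
def Cart {OC : Type u} (_ : CloneStruct.{u, v} OC) : Type u := Σ n : ℕ, Fin n → OC

/-- The category structure on `Cart C`: morphisms `[A₁,…,Aₙ] ⟶ [B₁,…,Bₘ]` are `m`-tuples of
multimaps `A₁,…,Aₙ → Bᵢ`, identities are tuples of projections, and composition is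
simultaneous substitution. -/
instance {OC : Type u} (C : CloneStruct.{u, v} OC) : Category.{v} (Cart C) where
  Hom X Y := ∀ i : Fin Y.1, C.Hom X.2 (Y.2 i)
  id X := C.pr X.2
  comp f g := fun i => C.subst (g i) f
  id_comp f := funext fun i => C.subst_pr (f i)
  comp_id f := funext fun i => C.pr_subst _ i f
  assoc f g h := funext fun i => (C.subst_assoc (h i) g f).symm

/-- The chosen finite products on `Cart C`: the terminal object is the empty list and binary
products are given by list concatenation, with projection tuples built from the projections
of the clone. -/
def cartP {OC : Type u} (C : CloneStruct.{u, v} OC) : ChosenFP (Cart C) where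
  unit := ⟨0, Fin.elim0⟩
  toUnit X := fun i => i.elim0
  toUnit_unique f := funext fun i => i.elim0
  prod X Y := ⟨X.1 + Y.1, Fin.append X.2 Y.2⟩
  fst X Y := fun i =>
    C.cstT (Fin.append_left X.2 Y.2 i) (C.pr (Fin.append X.2 Y.2) (Fin.castAdd Y.1 i))
  snd X Y := fun i =>
    C.cstT (Fin.append_right X.2 Y.2 i) (C.pr (Fin.append X.2 Y.2) (Fin.natAdd X.1 i))
  lift := fun {X Y Z} f g i =>
    Fin.addCases (motive := fun i => C.Hom Z.2 (Fin.append X.2 Y.2 i))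
      (fun i₁ => C.cstT (Fin.append_left X.2 Y.2 i₁).symm (f i₁))
      (fun i₂ => C.cstT (Fin.append_right X.2 Y.2 i₂).symm (g i₂)) i
  lift_fst := by
    intro X Y Z f g
    funext i
    show C.subst (C.cstT (Fin.append_left X.2 Y.2 i)
      (C.pr (Fin.append X.2 Y.2) (Fin.castAdd Y.1 i))) _ = f i
    rw [C.subst_cstT, C.pr_subst]
    beta_reduce
    rw [Fin.addCases_left, C.cstT_cstT]
  lift_snd := by
    intro X Y Z f g
    funext i
    show C.subst (C.cstT (Fin.append_right X.2 Y.2 i)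
      (C.pr (Fin.append X.2 Y.2) (Fin.natAdd X.1 i))) _ = g i
    rw [C.subst_cstT, C.pr_subst]
    beta_reduce
    rw [Fin.addCases_right, C.cstT_cstT]
  lift_unique := by
    intro X Y Z m
    funext i
    induction i using Fin.addCases with
    | left i₁ =>
        beta_reduce
        rw [Fin.addCases_left]
        show m _ = C.cstT _ (C.subst (C.cstT _ (C.pr _ _)) m)
        rw [C.subst_cstT, C.pr_subst, C.cstT_cstT]
    | right i₂ =>
        beta_reduce
        rw [Fin.addCases_right]
        show m _ = C.cstT _ (C.subst (C.cstT _ (C.pr _ _)) m)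
        rw [C.subst_cstT, C.pr_subst, C.cstT_cstT]

/-- A transformation `η : f ⇒ g` between clone morphisms: a family of unary multimaps
`η_A ∈ D(fA; gA)` with `η_B[f(t)] = g(t)[η_{A₁}[pr¹],…,η_{Aₙ}[prⁿ]]` for every multimap
`t : A₁,…,Aₙ → B`. -/
def IsCloneTransf {OC : Type u} {OD : Type u'} {C : CloneStruct.{u, v} OC}
    {D : CloneStruct.{u', v'} OD} (f g : CloneHom C D)
    (η : ∀ A : OC, D.Hom (fun _ : Fin 1 => f.obj A) (g.obj A)) : Prop :=
  ∀ {n : ℕ} {Γ : Fin n → OC} {B : OC} (t : C.Hom Γ B),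
    D.subst (η B) (fun _ => f.map t)
      = D.subst (g.map t)
          (fun i => D.subst (η (Γ i)) (fun _ => D.pr (fun k => f.obj (Γ k)) i))

/-- A functor between categories with chosen finite products preserves finite products
(not necessarily strictly) if the canonical comparison maps to the chosen terminal object
and to the chosen binary products are isomorphisms. -/
def PreservesFP {D : Type u'} [Category.{v'} D] {E : Type u''} [Category.{v''} E]
    (P : ChosenFP D) (Q : ChosenFP E) (G : D ⥤ E) : Prop :=
  IsIso (Q.toUnit (G.obj P.unit)) ∧
  ∀ X Y : D, IsIso (Q.lift (G.map (P.fst X Y)) (G.map (P.snd X Y)))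

section Helpers

variable {D : Type u'} [Category.{v'} D] (P : ChosenFP D)

theorem ChosenFP.eq_nlift {n : ℕ} {Γ : Fin n → D} {X : D} (m : X ⟶ P.nprod Γ) :
    m = P.nlift (fun i => m ≫ P.nproj Γ i) := by
  conv_lhs => rw [← Category.comp_id m, ← P.nlift_nproj_eta Γ]
  rw [P.comp_nlift]

theorem ChosenFP.nlift_one {A Z : D} (h : Fin 1 → (Z ⟶ A)) :
    P.nlift (Γ := fun _ => A) h = h 0 ≫ P.lift (P.toUnit A) (𝟙 A) := by
  show P.lift _ (h (Fin.last 0)) = _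
  rw [P.comp_lift, Category.comp_id]
  congr 1
  exact (P.toUnit_unique _).symm

theorem ChosenFP.snd_lift_one {A : D} :
    P.snd P.unit A ≫ P.lift (P.toUnit A) (𝟙 A) = 𝟙 (P.prod P.unit A) := by
  rw [P.comp_lift, Category.comp_id, ← P.lift_fst_snd]
  congr 1
  exact (P.toUnit_unique _).trans (P.toUnit_unique _).symm

theorem ChosenFP.nproj_one {A : D} :
    P.nproj (fun _ : Fin 1 => A) 0 = P.snd P.unit A := by
  show P.nproj (fun _ : Fin 1 => A) (Fin.last 0) = _
  simp only [ChosenFP.nproj, Fin.lastCases_last]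
  rfl

end Helpers

section Prods

universe uE vE

variable {E : Type uE} [Category.{vE} E]

/-- `W` with projections `p` is a product of the finite family `Γ`. -/
def IsProd {n : ℕ} (Γ : Fin n → E) (W : E) (p : ∀ i, W ⟶ Γ i) : Prop :=
  ∀ (Z : E) (q : ∀ i, Z ⟶ Γ i), ∃! m : Z ⟶ W, ∀ i, m ≫ p i = q i

/-- `W` with projections `pa`, `pb` is a binary product of `A` and `B`. -/
def IsBinProd (A B W : E) (pa : W ⟶ A) (pb : W ⟶ B) : Prop :=
  ∀ (Z : E) (f : Z ⟶ A) (g : Z ⟶ B), ∃! m : Z ⟶ W, m ≫ pa = f ∧ m ≫ pb = g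

theorem IsProd.ofIso {n : ℕ} {Γ : Fin n → E} {W W' : E} {p : ∀ i, W ⟶ Γ i}
    (h : IsProd Γ W p) (e : W' ⟶ W) (e' : W ⟶ W')
    (he : e ≫ e' = 𝟙 W') (he' : e' ≫ e = 𝟙 W)
    (p' : ∀ i, W' ⟶ Γ i) (hp : ∀ i, p' i = e ≫ p i) : IsProd Γ W' p' := by
  intro Z q
  obtain ⟨m, hm, hu⟩ := h Z q
  refine ⟨m ≫ e', fun i => ?_, fun m' hm' => ?_⟩
  · rw [hp, Category.assoc, ← Category.assoc e', he', Category.id_comp, hm]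
  · have h2 : m' ≫ e = m := hu (m' ≫ e) (fun i => by
      rw [Category.assoc, ← hp, hm'])
    rw [← h2, Category.assoc, he, Category.comp_id]

theorem IsProd.isIso {n : ℕ} {Γ : Fin n → E} {W W' : E} {p : ∀ i, W ⟶ Γ i}
    {p' : ∀ i, W' ⟶ Γ i} (h : IsProd Γ W p) (h' : IsProd Γ W' p')
    (m : W ⟶ W') (hm : ∀ i, m ≫ p' i = p i) : IsIso m := by
  obtain ⟨m', hm', _⟩ := h W' p'
  refine ⟨m', ?_, ?_⟩
  · exact ExistsUnique.unique (h W p) (fun i => by rw [Category.assoc, hm', hm])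
      (fun i => Category.id_comp _)
  · exact ExistsUnique.unique (h' W' p') (fun i => by rw [Category.assoc, hm, hm'])
      (fun i => Category.id_comp _)

theorem IsProd.succ {n : ℕ} {Γ : Fin (n + 1) → E} {W W1 : E}
    {p1 : ∀ i : Fin n, W1 ⟶ Γ i.castSucc} {pa : W ⟶ W1} {pb : W ⟶ Γ (Fin.last n)}
    (h1 : IsProd _ W1 p1) (hb : IsBinProd W1 (Γ (Fin.last n)) W pa pb)
    (p : ∀ i, W ⟶ Γ i)
    (hpc : ∀ i : Fin n, p i.castSucc = pa ≫ p1 i) (hpl : p (Fin.last n) = pb) :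
    IsProd Γ W p := by
  intro Z q
  obtain ⟨m1, hm1, hu1⟩ := h1 Z (fun i => q i.castSucc)
  obtain ⟨m, ⟨hma, hmb⟩, hu⟩ := hb Z m1 (q (Fin.last n))
  refine ⟨m, fun i => ?_, fun m' hm' => ?_⟩
  · induction i using Fin.lastCases with
    | last => rw [hpl, hmb]
    | cast i => rw [hpc, ← Category.assoc, hma, hm1]
  · refine hu m' ⟨?_, ?_⟩
    · refine hu1 (m' ≫ pa) (fun i => ?_)
      rw [Category.assoc, ← hpc, hm']
    · rw [← hpl, hm']

theorem IsProd.append {a b : ℕ} {Δ : Fin (a + b) → E} {Γ1 : Fin a → E} {Γ2 : Fin b → E}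
    {W1 W2 W : E} {p1 : ∀ i, W1 ⟶ Γ1 i} {p2 : ∀ j, W2 ⟶ Γ2 j} {pa : W ⟶ W1} {pb : W ⟶ W2}
    (h1 : IsProd Γ1 W1 p1) (h2 : IsProd Γ2 W2 p2) (hb : IsBinProd W1 W2 W pa pb)
    (hL : ∀ i, Γ1 i = Δ (Fin.castAdd b i)) (hR : ∀ j, Γ2 j = Δ (Fin.natAdd a j))
    (p : ∀ k, W ⟶ Δ k)
    (hl : ∀ i, p (Fin.castAdd b i) = pa ≫ p1 i ≫ eqToHom (hL i))
    (hr : ∀ j, p (Fin.natAdd a j) = pb ≫ p2 j ≫ eqToHom (hR j)) :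
    IsProd Δ W p := by
  intro Z q
  obtain ⟨m1, hm1, hu1⟩ := h1 Z (fun i => q (Fin.castAdd b i) ≫ eqToHom (hL i).symm)
  obtain ⟨m2, hm2, hu2⟩ := h2 Z (fun j => q (Fin.natAdd a j) ≫ eqToHom (hR j).symm)
  obtain ⟨m, ⟨hma, hmb⟩, hu⟩ := hb Z m1 m2
  refine ⟨m, fun k => ?_, fun m' hm' => ?_⟩
  · induction k using Fin.addCases with
    | left i =>
        rw [hl, ← Category.assoc m, hma, ← Category.assoc, hm1,
          Category.assoc, eqToHom_trans, eqToHom_refl, Category.comp_id]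
    | right j =>
        rw [hr, ← Category.assoc m, hmb, ← Category.assoc, hm2,
          Category.assoc, eqToHom_trans, eqToHom_refl, Category.comp_id]
  · refine hu m' ⟨?_, ?_⟩
    · refine hu1 (m' ≫ pa) (fun i => ?_)
      rw [Category.assoc, ← hm' (Fin.castAdd b i), hl]
      simp
    · refine hu2 (m' ≫ pb) (fun j => ?_)
      rw [Category.assoc, ← hm' (Fin.natAdd a j), hr]
      simp

end Prods

section ProdsFP

variable {D : Type u'} [Category.{v'} D] (P : ChosenFP D)

theorem ChosenFP.isBinProd (X Y : D) : IsBinProd X Y (P.prod X Y) (P.fst X Y) (P.snd X Y) := by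
  intro Z f g
  exact ⟨P.lift f g, ⟨P.lift_fst f g, P.lift_snd f g⟩, fun m ⟨h1, h2⟩ => by
    rw [P.lift_unique m, h1, h2]⟩

theorem ChosenFP.isProd_nprod {n : ℕ} (Γ : Fin n → D) :
    IsProd Γ (P.nprod Γ) (P.nproj Γ) := by
  intro Z q
  exact ⟨P.nlift q, P.nlift_nproj q, fun m hm => by
    rw [P.eq_nlift m]
    exact congrArg P.nlift (funext fun i => hm i)⟩

end ProdsFP

section Phi

variable {OC : Type u} (C : CloneStruct.{u, v} OC)
variable {D : Type u'} [Category.{v'} D] (P : ChosenFP D)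

/-- The singleton object of `Cart C`. -/
@[reducible] def sgl (A : OC) : Cart C := ⟨1, fun _ => A⟩

/-- Building an object of `Cart C` from a list. -/
@[reducible] def obC {n : ℕ} (Γ : Fin n → OC) : Cart C := ⟨n, Γ⟩

/-- A multimap as a morphism into a singleton in `Cart C`. -/
def hatc {n : ℕ} {Γ : Fin n → OC} {B : OC} (t : C.Hom Γ B) : obC C Γ ⟶ sgl C B :=
  fun _ => t

/-- The projection of an object of `Cart C` onto the singleton of its `i`-th component. -/
def prc (X : Cart C) (i : Fin X.1) : X ⟶ sgl C (X.2 i) := fun _ => C.pr X.2 i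

/-- The functor `Cart C ⥤ D` associated to a clone morphism `C → Cl D`. -/
def PhiF (f : CloneHom C P.clOf) : Cart C ⥤ D where
  obj X := P.nprod (fun i => f.obj (X.2 i))
  map {X Y} ts := P.nlift (fun i => f.map (ts i))
  map_id X := by
    have h : (fun i => f.map (C.pr X.2 i)) = fun i => P.nproj (fun k => f.obj (X.2 k)) i :=
      funext fun i => f.map_pr X.2 i
    show P.nlift (fun i => f.map (C.pr X.2 i)) = _
    rw [h, P.nlift_nproj_eta]
  map_comp {X Y Z} ts us := by
    show P.nlift (fun i => f.map (C.subst (us i) ts)) = _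
    have h : (fun i => f.map (C.subst (us i) ts))
        = fun i => P.nlift (fun k => f.map (ts k)) ≫ f.map (us i) :=
      funext fun i => f.map_subst (us i) ts
    erw [h, ← P.comp_nlift]

/-- The unary component of a clone transformation, as a map `f A ⟶ g A`. -/
def etaBar {f g : CloneHom C P.clOf}
    (η : ∀ A : OC, P.clOf.Hom (fun _ : Fin 1 => f.obj A) (g.obj A)) (A : OC) :
    f.obj A ⟶ g.obj A :=
  P.lift (P.toUnit (f.obj A)) (𝟙 (f.obj A)) ≫ η A

/-- The component at `X` of the natural transformation associated to a clone
transformation. -/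
def appT {f g : CloneHom C P.clOf}
    (η : ∀ A : OC, P.clOf.Hom (fun _ : Fin 1 => f.obj A) (g.obj A)) (X : Cart C) :
    (PhiF C P f).obj X ⟶ (PhiF C P g).obj X :=
  P.nlift (fun i => P.nproj (fun k => f.obj (X.2 k)) i ≫
    P.lift (P.toUnit (f.obj (X.2 i))) (𝟙 (f.obj (X.2 i))) ≫ η (X.2 i))

variable {C P}

theorem isCloneTransf_iff {f g : CloneHom C P.clOf}
    (η : ∀ A : OC, P.clOf.Hom (fun _ : Fin 1 => f.obj A) (g.obj A)) :
    IsCloneTransf f g η ↔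
      ∀ {n : ℕ} {Γ : Fin n → OC} {B : OC} (t : C.Hom Γ B),
        f.map t ≫ etaBar C P η B = appT C P η (obC C Γ) ≫ g.map t := by
  have key : ∀ {n : ℕ} {Γ : Fin n → OC} {B : OC} (t : C.Hom Γ B),
      (P.clOf.subst (η B) (fun _ => f.map t)
        = P.clOf.subst (g.map t)
            (fun i => P.clOf.subst (η (Γ i)) (fun _ => P.clOf.pr (fun k => f.obj (Γ k)) i)))
      ↔ (f.map t ≫ etaBar C P η B = appT C P η (obC C Γ) ≫ g.map t) := by
    intro n Γ B t
    have e1 : P.clOf.subst (η B) (fun _ => f.map t) = f.map t ≫ etaBar C P η B := by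
      show P.nlift (fun _ : Fin 1 => f.map t) ≫ η B = _
      erw [P.nlift_one (fun _ => f.map t), Category.assoc]
      try rfl
    have e2 : P.clOf.subst (g.map t)
        (fun i => P.clOf.subst (η (Γ i)) (fun _ => P.clOf.pr (fun k => f.obj (Γ k)) i))
        = appT C P η (obC C Γ) ≫ g.map t := by
      show P.nlift (fun i => P.nlift (fun _ : Fin 1 => P.nproj (fun k => f.obj (Γ k)) i)
          ≫ η (Γ i)) ≫ g.map t = _
      congr 1
      refine congrArg P.nlift (funext fun i => ?_)
      erw [P.nlift_one (fun _ => P.nproj (fun k => f.obj (Γ k)) i), Category.assoc]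
      try rfl
    rw [e1, e2]
    exact Iff.rfl
  constructor
  · intro hη n Γ B t
    exact (key t).mp (hη t)
  · intro hη n Γ B t
    exact (key t).mpr (hη t)

/-- The natural transformation associated to a clone transformation. -/
def PhiT (f g : CloneHom C P.clOf)
    (η : ∀ A : OC, P.clOf.Hom (fun _ : Fin 1 => f.obj A) (g.obj A))
    (hη : IsCloneTransf f g η) : PhiF C P f ⟶ PhiF C P g where
  app X := appT C P η X
  naturality {X Y} ts := by
    show P.nlift (fun i => f.map (ts i)) ≫ appT C P η Y
      = appT C P η X ≫ P.nlift (fun i => g.map (ts i))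
    erw [appT, P.comp_nlift, P.comp_nlift]
    refine congrArg P.nlift (funext fun i => ?_)
    erw [← Category.assoc, P.nlift_nproj]
    have h := (isCloneTransf_iff η).mp hη (ts i)
    show f.map (ts i) ≫ etaBar C P η (Y.2 i) = _
    rw [h]
    rfl

theorem appT_sgl {f g : CloneHom C P.clOf}
    (η : ∀ A : OC, P.clOf.Hom (fun _ : Fin 1 => f.obj A) (g.obj A)) (A : OC) :
    appT C P η (sgl C A) = (P.snd P.unit (f.obj A) ≫ etaBar C P η A)
      ≫ P.lift (P.toUnit (g.obj A)) (𝟙 (g.obj A)) := by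
  show P.nlift (fun i : Fin 1 => P.nproj (fun _ : Fin 1 => f.obj A) i ≫
      P.lift (P.toUnit (f.obj A)) (𝟙 (f.obj A)) ≫ η A) = _
  rw [P.nlift_one]
  congr 1

theorem eta_eq_appT {f g : CloneHom C P.clOf}
    (η : ∀ A : OC, P.clOf.Hom (fun _ : Fin 1 => f.obj A) (g.obj A)) (A : OC) :
    η A = appT C P η (sgl C A) ≫ P.snd P.unit (g.obj A) := by
  erw [appT_sgl, Category.assoc, P.lift_snd, Category.comp_id]
  show η A = P.snd P.unit (f.obj A) ≫ P.lift (P.toUnit (f.obj A)) (𝟙 (f.obj A)) ≫ η A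
  erw [← Category.assoc, P.snd_lift_one, Category.id_comp]

end Phi

section PhiMore

variable {OC : Type u} {C : CloneStruct.{u, v} OC}
variable {D : Type u'} [Category.{v'} D] {P : ChosenFP D}

theorem appT_id (f : CloneHom C P.clOf) (X : Cart C) :
    appT C P (fun A => P.clOf.pr (fun _ : Fin 1 => f.obj A) 0) X = 𝟙 ((PhiF C P f).obj X) := by
  show P.nlift (fun i => P.nproj (fun k => f.obj (X.2 k)) i ≫
      P.lift (P.toUnit (f.obj (X.2 i))) (𝟙 (f.obj (X.2 i))) ≫
        P.nproj (fun _ : Fin 1 => f.obj (X.2 i)) 0) = _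
  have h : (fun i => P.nproj (fun k => f.obj (X.2 k)) i ≫
      P.lift (P.toUnit (f.obj (X.2 i))) (𝟙 (f.obj (X.2 i))) ≫
        P.nproj (fun _ : Fin 1 => f.obj (X.2 i)) 0)
      = fun i => P.nproj (fun k => f.obj (X.2 k)) i := by
    funext i
    rw [P.nproj_one, P.lift_snd, Category.comp_id]
  rw [h, P.nlift_nproj_eta]
  rfl

theorem appT_comp (f g h : CloneHom C P.clOf)
    (η : ∀ A : OC, P.clOf.Hom (fun _ : Fin 1 => f.obj A) (g.obj A))
    (ε : ∀ A : OC, P.clOf.Hom (fun _ : Fin 1 => g.obj A) (h.obj A)) (X : Cart C) :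
    appT C P (fun A => P.clOf.subst (ε A) (fun _ => η A)) X
      = appT C P η X ≫ appT C P ε X := by
  show P.nlift (fun i => P.nproj (fun k => f.obj (X.2 k)) i ≫
      P.lift (P.toUnit (f.obj (X.2 i))) (𝟙 (f.obj (X.2 i))) ≫
        (P.nlift (fun _ : Fin 1 => η (X.2 i)) ≫ ε (X.2 i))) = _
  erw [appT, appT, P.comp_nlift]
  refine congrArg P.nlift (funext fun i => ?_)
  erw [← Category.assoc (P.nlift _), P.nlift_nproj, P.nlift_one]
  repeat erw [Category.assoc]
  rfl

theorem kappa_app (f g : CloneHom C P.clOf) (κ : PhiF C P f ⟶ PhiF C P g) (X : Cart C) :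
    κ.app X = appT C P
      (fun A => κ.app (sgl C A) ≫ P.snd P.unit (g.obj A)) X := by
  conv_lhs => rw [P.eq_nlift (κ.app X)]
  refine congrArg P.nlift (funext fun i => ?_)
  have hf : (PhiF C P f).map (prc C X i)
      = P.nproj (fun k => f.obj (X.2 k)) i ≫
        P.lift (P.toUnit (f.obj (X.2 i))) (𝟙 (f.obj (X.2 i))) := by
    show P.nlift (fun _ : Fin 1 => f.map (C.pr X.2 i)) = _
    have e : (fun _ : Fin 1 => f.map (C.pr X.2 i))
        = fun _ : Fin 1 => P.nproj (fun k => f.obj (X.2 k)) i :=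
      funext fun _ => f.map_pr X.2 i
    rw [e, P.nlift_one]
  have hg : (PhiF C P g).map (prc C X i)
      = P.nproj (fun k => g.obj (X.2 k)) i ≫
        P.lift (P.toUnit (g.obj (X.2 i))) (𝟙 (g.obj (X.2 i))) := by
    show P.nlift (fun _ : Fin 1 => g.map (C.pr X.2 i)) = _
    have e : (fun _ : Fin 1 => g.map (C.pr X.2 i))
        = fun _ : Fin 1 => P.nproj (fun k => g.obj (X.2 k)) i :=
      funext fun _ => g.map_pr X.2 i
    rw [e, P.nlift_one]
  have hg' : P.nproj (fun k => g.obj (X.2 k)) i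
      = (PhiF C P g).map (prc C X i) ≫ P.snd P.unit (g.obj (X.2 i)) := by
    erw [hg, Category.assoc, P.lift_snd, Category.comp_id]
  erw [hg', ← Category.assoc, ← NatTrans.naturality, hf]
  repeat erw [Category.assoc]
  rfl

theorem kappa_transf (f g : CloneHom C P.clOf) (κ : PhiF C P f ⟶ PhiF C P g) :
    IsCloneTransf f g (fun A => κ.app (sgl C A) ≫ P.snd P.unit (g.obj A)) := by
  erw [isCloneTransf_iff]
  intro n Γ B t
  have hf : (PhiF C P f).map (hatc C t)
      = f.map t ≫ P.lift (P.toUnit (f.obj B)) (𝟙 (f.obj B)) := by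
    show P.nlift (fun _ : Fin 1 => f.map t) = _
    erw [P.nlift_one]
  have hg : (PhiF C P g).map (hatc C t)
      = g.map t ≫ P.lift (P.toUnit (g.obj B)) (𝟙 (g.obj B)) := by
    show P.nlift (fun _ : Fin 1 => g.map t) = _
    erw [P.nlift_one]
  show f.map t ≫ P.lift (P.toUnit (f.obj B)) (𝟙 (f.obj B)) ≫
      (κ.app (sgl C B) ≫ P.snd P.unit (g.obj B)) = _
  erw [← Category.assoc, ← Category.assoc, ← hf, NatTrans.naturality, hg]
  erw [Category.assoc, Category.assoc, P.lift_snd, Category.comp_id]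
  rw [← kappa_app f g κ (obC C Γ)]
  rfl

end PhiMore

section EssSurj

universe uD1 vD1 uD2 vD2

variable {D1 : Type uD1} [Category.{vD1} D1] {D2 : Type uD2} [Category.{vD2} D2]

theorem ChosenFP.isBinProd_of_inv {D : Type u'} [Category.{v'} D] (P : ChosenFP D)
    {A B W : D} (pa : W ⟶ A) (pb : W ⟶ B) (binv : P.prod A B ⟶ W)
    (h1 : P.lift pa pb ≫ binv = 𝟙 W) (h2 : binv ≫ P.lift pa pb = 𝟙 (P.prod A B)) :
    IsBinProd A B W pa pb := by
  have hfa : binv ≫ pa = P.fst A B := by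
    have := congrArg (· ≫ P.fst A B) h2
    simpa [P.lift_fst] using this
  have hfb : binv ≫ pb = P.snd A B := by
    have := congrArg (· ≫ P.snd A B) h2
    simpa [P.lift_snd] using this
  intro Z f g
  refine ⟨P.lift f g ≫ binv, ⟨?_, ?_⟩, fun m' ⟨hm1, hm2⟩ => ?_⟩
  · rw [Category.assoc, hfa, P.lift_fst]
  · rw [Category.assoc, hfb, P.lift_snd]
  · have hl : m' ≫ P.lift pa pb = P.lift f g := by
      rw [P.comp_lift, hm1, hm2]
    calc m' = m' ≫ 𝟙 W := (Category.comp_id m').symm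
      _ = m' ≫ P.lift pa pb ≫ binv := by rw [h1]
      _ = P.lift f g ≫ binv := by rw [← Category.assoc, hl]

theorem preservesFP_nprod (P1 : ChosenFP D1) (P2 : ChosenFP D2) (G : D1 ⥤ D2)
    (hG : PreservesFP P1 P2 G) :
    ∀ {n : ℕ} (F : Fin n → D1),
      IsProd (fun i => G.obj (F i)) (G.obj (P1.nprod F)) (fun i => G.map (P1.nproj F i)) := by
  intro n
  induction n with
  | zero =>
      intro F Z q
      obtain ⟨tinv, ht1, ht2⟩ := hG.1.out
      refine ⟨P2.toUnit Z ≫ tinv, fun i => i.elim0, fun m' _ => ?_⟩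
      have : m' ≫ P2.toUnit (G.obj P1.unit) ≫ tinv = P2.toUnit Z ≫ tinv := by
        erw [← Category.assoc, P2.toUnit_unique (m' ≫ P2.toUnit (G.obj P1.unit))]
      exact ((Category.comp_id m').symm.trans (congrArg (m' ≫ ·) ht1.symm)).trans this
  | succ n ih =>
      intro F
      obtain ⟨binv, hb1, hb2⟩ := (hG.2 (P1.nprod (fun i : Fin n => F i.castSucc))
        (F (Fin.last n))).out
      have hbin := P2.isBinProd_of_inv (G.map (P1.fst _ _)) (G.map (P1.snd _ _)) binv hb1 hb2
      refine IsProd.succ (ih (fun i => F i.castSucc)) hbin _ (fun i => ?_) ?_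
      · erw [← G.map_comp]
        congr 1
        simp [ChosenFP.nproj]
        exact Fin.lastCases_castSucc (motive := fun j => P1.nprod F ⟶ F j) i
      · congr 1
        simp [ChosenFP.nproj]
        exact Fin.lastCases_last (motive := fun j => P1.nprod F ⟶ F j)

end EssSurj

section CartProd

variable {OC : Type u} {C : CloneStruct.{u, v} OC}

theorem isProd_cart (X : Cart C) : IsProd (fun i => sgl C (X.2 i)) X (prc C X) := by
  intro Z q
  refine ⟨fun i => q i 0, fun i => ?_, fun m' hm' => ?_⟩
  · funext k
    show C.subst (C.pr X.2 i) (fun j => q j 0) = q i k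
    rw [C.pr_subst]
    have hk : k = 0 := Subsingleton.elim k 0
    rw [hk]
  · funext i
    have := congrFun (hm' i) 0
    show m' i = q i 0
    rw [← this]
    exact (C.pr_subst X.2 i m').symm

end CartProd

section Final

variable {OC : Type u} {C : CloneStruct.{u, v} OC}
variable {D : Type u'} [Category.{v'} D] {P : ChosenFP D}

theorem CloneHom.map_cstT (f : CloneHom C P.clOf) {n : ℕ} {Γ : Fin n → OC} {B B' : OC}
    (h : B = B') (t : C.Hom Γ B) :
    f.map (C.cstT h t) = f.map t ≫ eqToHom (congrArg f.obj h) := by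
  subst h
  erw [C.cstT_rfl, eqToHom_refl, Category.comp_id]

/-- A tuple of multimaps as a morphism in `Cart C`. -/
@[reducible] def tupc (C : CloneStruct.{u, v} OC) {n m : ℕ} {Γ : Fin n → OC} {Δ : Fin m → OC}
    (u : ∀ i, C.Hom Γ (Δ i)) : obC C Γ ⟶ obC C Δ := u

theorem phiF_preservesFP (f : CloneHom C P.clOf) : PreservesFP (cartP C) P (PhiF C P f) := by
  constructor
  · show IsIso (P.toUnit P.unit)
    have h : P.toUnit P.unit = 𝟙 P.unit := (P.toUnit_unique _).symm
    rw [h]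
    infer_instance
  · intro X Y
    refine IsProd.isIso (P.isProd_nprod (fun k => f.obj (Fin.append X.2 Y.2 k)))
      (IsProd.append (P.isProd_nprod (fun i => f.obj (X.2 i)))
        (P.isProd_nprod (fun j => f.obj (Y.2 j)))
        (P.isBinProd _ _)
        (fun i => (congrArg f.obj (Fin.append_left X.2 Y.2 i)).symm)
        (fun j => (congrArg f.obj (Fin.append_right X.2 Y.2 j)).symm)
        (fun k => Fin.addCases
          (motive := fun k => P.prod (P.nprod (fun i => f.obj (X.2 i)))
            (P.nprod (fun j => f.obj (Y.2 j))) ⟶ f.obj (Fin.append X.2 Y.2 k))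
          (fun i => P.fst _ _ ≫ P.nproj (fun i => f.obj (X.2 i)) i
            ≫ eqToHom (congrArg f.obj (Fin.append_left X.2 Y.2 i)).symm)
          (fun j => P.snd _ _ ≫ P.nproj (fun j => f.obj (Y.2 j)) j
            ≫ eqToHom (congrArg f.obj (Fin.append_right X.2 Y.2 j)).symm) k)
        (fun i => by beta_reduce; rw [Fin.addCases_left])
        (fun j => by beta_reduce; rw [Fin.addCases_right]))
      _ (fun k => ?_)
    have hfst : P.lift ((PhiF C P f).map ((cartP C).fst X Y)) ((PhiF C P f).map ((cartP C).snd X Y))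
        ≫ P.fst (P.nprod fun i => f.obj (X.2 i)) (P.nprod fun j => f.obj (Y.2 j))
        = (PhiF C P f).map ((cartP C).fst X Y) := P.lift_fst _ _
    have hsnd : P.lift ((PhiF C P f).map ((cartP C).fst X Y)) ((PhiF C P f).map ((cartP C).snd X Y))
        ≫ P.snd (P.nprod fun i => f.obj (X.2 i)) (P.nprod fun j => f.obj (Y.2 j))
        = (PhiF C P f).map ((cartP C).snd X Y) := P.lift_snd _ _
    induction k using Fin.addCases with
    | left i =>
        beta_reduce
        erw [Fin.addCases_left, ← Category.assoc, hfst]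
        show P.nlift (fun i => f.map (((cartP C).fst X Y) i))
          ≫ P.nproj (fun i => f.obj (X.2 i)) i ≫ _ = _
        erw [← Category.assoc, P.nlift_nproj]
        show f.map (C.cstT (Fin.append_left X.2 Y.2 i)
          (C.pr (Fin.append X.2 Y.2) (Fin.castAdd Y.1 i))) ≫ _ = _
        erw [f.map_cstT, Category.assoc, eqToHom_trans, eqToHom_refl, Category.comp_id,
          f.map_pr]
        rfl
    | right j =>
        beta_reduce
        erw [Fin.addCases_right, ← Category.assoc, hsnd]
        show P.nlift (fun j => f.map (((cartP C).snd X Y) j))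
          ≫ P.nproj (fun j => f.obj (Y.2 j)) j ≫ _ = _
        erw [← Category.assoc, P.nlift_nproj]
        show f.map (C.cstT (Fin.append_right X.2 Y.2 j)
          (C.pr (Fin.append X.2 Y.2) (Fin.natAdd X.1 j))) ≫ _ = _
        erw [f.map_cstT, Category.assoc, eqToHom_trans, eqToHom_refl, Category.comp_id,
          f.map_pr]
        rfl

theorem phiF_essSurj (G : Cart C ⥤ D) (hG : PreservesFP (cartP C) P G) :
    ∃ f : CloneHom C P.clOf, Nonempty (PhiF C P f ≅ G) := by
  classical
  let cmp : ∀ X : Cart C, G.obj X ⟶ P.nprod (fun i => G.obj (sgl C (X.2 i))) :=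
    fun X => P.nlift (fun i => G.map (prc C X i))
  have hprod : ∀ X : Cart C, IsProd (fun i => G.obj (sgl C (X.2 i))) (G.obj X)
      (fun i => G.map (prc C X i)) := by
    intro X
    have hX := isProd_cart (C := C) X
    have hN := (cartP C).isProd_nprod (fun i => sgl C (X.2 i))
    have hu : IsIso ((cartP C).nlift (prc C X)) :=
      IsProd.isIso hX hN _ (fun i => (cartP C).nlift_nproj (prc C X) i)
    obtain ⟨v, hv1, hv2⟩ := hu.out
    have hGN := preservesFP_nprod (cartP C) P G hG (fun i => sgl C (X.2 i))
    refine IsProd.ofIso hGN (G.map ((cartP C).nlift (prc C X))) (G.map v) ?_ ?_ _ (fun i => ?_)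
    · rw [← G.map_comp, hv1, G.map_id]
    · rw [← G.map_comp, hv2, G.map_id]
    · rw [← G.map_comp]
      congr 1
      exact ((cartP C).nlift_nproj (prc C X) i).symm
  have hiso : ∀ X, IsIso (cmp X) := fun X =>
    IsProd.isIso (hprod X) (P.isProd_nprod _) (cmp X) (fun i => P.nlift_nproj _ i)
  choose dX hd1 hd2 using fun X => (hiso X).out
  refine ⟨{ obj := fun A => G.obj (sgl C A)
            map := fun {n Γ B} t => dX (obC C Γ) ≫ G.map (hatc C t)
            map_pr := ?_
            map_subst := ?_ }, ⟨NatIso.ofComponents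
              (fun X => ⟨dX X, cmp X, hd2 X, hd1 X⟩) ?_⟩⟩
  · intro n Γ j
    show dX (obC C Γ) ≫ G.map (prc C (obC C Γ) j)
      = P.nproj (fun i => G.obj (sgl C (Γ i))) j
    have h : G.map (prc C (obC C Γ) j)
        = P.nlift (fun i => G.map (prc C (obC C Γ) i))
          ≫ P.nproj (fun i => G.obj (sgl C (Γ i))) j :=
      (P.nlift_nproj (fun i => G.map (prc C (obC C Γ) i)) j).symm
    rw [h, ← Category.assoc]
    show (dX (obC C Γ) ≫ cmp (obC C Γ)) ≫ P.nproj (fun i => G.obj (sgl C (Γ i))) j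
      = P.nproj (fun i => G.obj (sgl C (Γ i))) j
    rw [hd2, Category.id_comp]
  · intro m n Δ B t Γ u
    have hcomp : hatc C (C.subst t u) = tupc C u ≫ hatc C t := rfl
    have hui : ∀ i, hatc C (u i) = tupc C u ≫ prc C (obC C Δ) i := by
      intro i
      funext k
      show u i = C.subst (C.pr Δ i) u
      rw [C.pr_subst]
    show dX (obC C Γ) ≫ G.map (hatc C (C.subst t u))
      = P.nlift (fun i => dX (obC C Γ) ≫ G.map (hatc C (u i)))
        ≫ (dX (obC C Δ) ≫ G.map (hatc C t))
    have e : (fun i => dX (obC C Γ) ≫ G.map (hatc C (u i)))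
        = fun i => (dX (obC C Γ) ≫ G.map (tupc C u)) ≫ G.map (prc C (obC C Δ) i) := by
      funext i
      rw [hui i, G.map_comp, Category.assoc]
    rw [hcomp, G.map_comp, e, ← P.comp_nlift]
    show dX (obC C Γ) ≫ G.map (tupc C u) ≫ G.map (hatc C t)
      = ((dX (obC C Γ) ≫ G.map (tupc C u)) ≫ cmp (obC C Δ)) ≫ dX (obC C Δ) ≫ G.map (hatc C t)
    rw [Category.assoc, ← Category.assoc (cmp (obC C Δ)), hd1, Category.id_comp,
      Category.assoc]
  · intro X Y ts
    have hts : ∀ i, hatc C (ts i) = tupc C ts ≫ prc C Y i := by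
      intro i
      funext k
      show ts i = C.subst (C.pr Y.2 i) ts
      rw [C.pr_subst]
    show P.nlift (fun i => dX X ≫ G.map (hatc C (ts i))) ≫ dX Y = dX X ≫ G.map ts
    have e : (fun i => dX X ≫ G.map (hatc C (ts i)))
        = fun i => (dX X ≫ G.map (tupc C ts)) ≫ G.map (prc C Y i) := by
      funext i
      erw [hts i, G.map_comp, Category.assoc]
    rw [e, ← P.comp_nlift]
    show ((dX X ≫ G.map (tupc C ts)) ≫ cmp Y) ≫ dX Y = dX X ≫ G.map ts
    erw [Category.assoc, hd1 Y]
    exact (Category.comp_id _).trans rfl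

end Final
/-- for a clone `C` and a category `D` with chosen finite products, the
category of finite-product-preserving functors `Cart C ⥤ D` and natural transformations is
equivalent to the category of clone morphisms `C → Cl D` and transformations of clone
morphisms.  The equivalence is expressed by a fully faithful, essentially surjective
assignment `Φ`: a clone morphism `f` goes to the functor `[A₁,…,Aₙ] ↦ fA₁ × ⋯ × fAₙ`,
`(t₁,…,tₘ) ↦ ⟨f t₁,…,f tₘ⟩` (which preserves finite products), and a transformation `η`
goes to the natural transformation with components `η_{A₁} × ⋯ × η_{Aₙ}`. -/
theorem stmt_10 {OC : Type u} (C : CloneStruct.{u, v} OC)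
    {D : Type u'} [Category.{v'} D] (P : ChosenFP D) :
    ∃ (Φ : CloneHom C P.clOf → (Cart C ⥤ D))
      (hobj : ∀ (f : CloneHom C P.clOf) (X : Cart C),
        (Φ f).obj X = P.nprod (fun i => f.obj (X.2 i)))
      (Φ₂ : ∀ (f g : CloneHom C P.clOf)
        (η : ∀ A : OC, P.clOf.Hom (fun _ : Fin 1 => f.obj A) (g.obj A)),
        IsCloneTransf f g η → (Φ f ⟶ Φ g)),
      -- Φ f acts on morphisms by `(t₁,…,tₘ) ↦ ⟨f t₁,…,f tₘ⟩`
      (∀ (f : CloneHom C P.clOf) (X Y : Cart C) (ts : X ⟶ Y),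
        eqToHom (hobj f X).symm ≫ (Φ f).map ts ≫ eqToHom (hobj f Y)
          = P.nlift (fun i => f.map (ts i))) ∧
      -- Φ f preserves finite products (not necessarily strictly)
      (∀ f : CloneHom C P.clOf, PreservesFP (cartP C) P (Φ f)) ∧
      -- Φ₂ η has components η_{A₁} × ⋯ × η_{Aₙ}
      (∀ (f g : CloneHom C P.clOf) (η : ∀ A : OC, P.clOf.Hom (fun _ : Fin 1 => f.obj A) (g.obj A))
          (hη : IsCloneTransf f g η) (X : Cart C),
        eqToHom (hobj f X).symm ≫ (Φ₂ f g η hη).app X ≫ eqToHom (hobj g X)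
          = P.nlift (fun i => P.nproj (fun k => f.obj (X.2 k)) i ≫
              P.lift (P.toUnit (f.obj (X.2 i))) (𝟙 (f.obj (X.2 i))) ≫ η (X.2 i))) ∧
      -- Φ₂ is functorial
      (∀ (f : CloneHom C P.clOf)
          (hid : IsCloneTransf f f (fun A => P.clOf.pr (fun _ : Fin 1 => f.obj A) 0)),
        Φ₂ f f _ hid = 𝟙 (Φ f)) ∧
      (∀ (f g h : CloneHom C P.clOf)
          (η : ∀ A : OC, P.clOf.Hom (fun _ : Fin 1 => f.obj A) (g.obj A))
          (ε : ∀ A : OC, P.clOf.Hom (fun _ : Fin 1 => g.obj A) (h.obj A))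
          (hη : IsCloneTransf f g η) (hε : IsCloneTransf g h ε)
          (hc : IsCloneTransf f h (fun A => P.clOf.subst (ε A) (fun _ => η A))),
        Φ₂ f h _ hc = Φ₂ f g η hη ≫ Φ₂ g h ε hε) ∧
      -- Φ is fully faithful on transformations
      (∀ f g : CloneHom C P.clOf,
        Function.Bijective
          (fun p : {η : ∀ A : OC, P.clOf.Hom (fun _ : Fin 1 => f.obj A) (g.obj A) //
              IsCloneTransf f g η} => Φ₂ f g p.1 p.2)) ∧
      -- Φ is essentially surjective onto the finite-product-preserving functors
      (∀ G : Cart C ⥤ D, PreservesFP (cartP C) P G →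
        ∃ f : CloneHom C P.clOf, Nonempty (Φ f ≅ G)) := by
    classical
  refine ⟨PhiF C P, fun f X => rfl, fun f g η hη => PhiT f g η hη, ?_, ?_, ?_, ?_, ?_, ?_, ?_⟩
  · intro f X Y ts
    show eqToHom rfl ≫ (PhiF C P f).map ts ≫ eqToHom rfl = _
    rw [eqToHom_refl, eqToHom_refl, Category.id_comp, Category.comp_id]
    rfl
  · intro f
    exact phiF_preservesFP f
  · intro f g η hη X
    show eqToHom rfl ≫ (PhiT f g η hη).app X ≫ eqToHom rfl = _
    rw [eqToHom_refl, eqToHom_refl, Category.id_comp, Category.comp_id]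
    rfl
  · intro f hid
    apply NatTrans.ext
    funext X
    exact appT_id f X
  · intro f g h η ε hη hε hc
    apply NatTrans.ext
    funext X
    exact appT_comp f g h η ε X
  · intro f g
    constructor
    · rintro ⟨η, hη⟩ ⟨η', hη'⟩ hpq
      apply Subtype.ext
      funext A
      have hap := congrArg
        (fun κ : PhiF C P f ⟶ PhiF C P g => κ.app (sgl C A) ≫ P.snd P.unit (g.obj A)) hpq
      show η A = η' A
      rw [eta_eq_appT η A, eta_eq_appT η' A]
      exact hap
    · intro κ
      refine ⟨⟨fun A => κ.app (sgl C A) ≫ P.snd P.unit (g.obj A), kappa_transf f g κ⟩, ?_⟩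
      apply NatTrans.ext
      funext X
      exact (kappa_app f g κ X).symm
  · intro G hG
    exact phiF_essSurj G hG
end

section
/- Let 𝐂 be a premulticategory, t : Γ,A₁,…,Aₙ,Γ' → B a multimap, uᵢ : Aᵢ¹,…,Aᵢ^{kᵢ} → Aᵢ (1 ≤ i ≤ n) and vᵢʲ : Δᵢʲ → Aᵢʲ (1 ≤ i ≤ n, 1 ≤ j ≤ kᵢ) multimaps. Fix p ∈ {1,…,n}, and suppose uᵢ is central for every i ≠ p and vᵢʲ is central for every (i,j) with i ≠ p (while u_p and the v_pʲ may be arbitrary). Then t⟨Γ, u₁⟨v₁¹,…,v₁^{k₁}⟩, …, u_p⟨v_p¹,…,v_p^{k_p}⟩, …, uₙ⟨vₙ¹,…,vₙ^{kₙ}⟩, Γ'⟩ = t⟨Γ,u₁,…,u_p,…,uₙ,Γ'⟩⟨Γ, v₁¹,…,v₁^{k₁},…,v_p¹,…,v_p^{k_p},…,vₙ¹,…,vₙ^{kₙ}, Γ'⟩. -/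
universe u v

/-- A premulticategory (Staton–Levy): objects, multimaps indexed by a list of sources and a
target, identities, and a one-at-a-time substitution operation satisfying unit and
associativity laws. -/
structure PreMulticat : Type (max (u + 1) (v + 1)) where
  Obj : Type u
  Hom : List Obj → Obj → Type v
  id : ∀ A : Obj, Hom [A] A
  subst : ∀ (Γ : List Obj) (A : Obj) (Γ' : List Obj) {B : Obj},
      Hom (Γ ++ (A :: Γ')) B → ∀ {Δ : List Obj}, Hom Δ A → Hom (Γ ++ (Δ ++ Γ')) B
  id_subst : ∀ {A : Obj} {Δ : List Obj} (u : Hom Δ A),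
      subst [] A [] (id A) u
        = _root_.cast (congrArg (fun l => Hom l A) (List.append_nil Δ).symm) u
  subst_id : ∀ (Γ : List Obj) (A : Obj) (Γ' : List Obj) {B : Obj}
      (t : Hom (Γ ++ (A :: Γ')) B), subst Γ A Γ' t (id A) = t
  subst_assoc : ∀ (Γ₁ : List Obj) (B : Obj) (Γ₁' : List Obj) {C : Obj}
      (t : Hom (Γ₁ ++ (B :: Γ₁')) C) (Γ₂ : List Obj) (A : Obj) (Γ₂' : List Obj)
      (u : Hom (Γ₂ ++ (A :: Γ₂')) B) {Δ : List Obj} (v : Hom Δ A),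
      subst (Γ₁ ++ Γ₂) A (Γ₂' ++ Γ₁')
          (_root_.cast (congrArg (fun l => Hom l C) (by simp)) (subst Γ₁ B Γ₁' t u)) v
        = _root_.cast (congrArg (fun l => Hom l C) (by simp))
            (subst Γ₁ B Γ₁' t (subst Γ₂ A Γ₂' u v))

namespace PreMulticat

variable (M : PreMulticat.{u, v})

/-- Transport of a multimap along an equality of contexts. -/
def cst {Γ Γ' : List M.Obj} {B : M.Obj} (h : Γ = Γ') (t : M.Hom Γ B) : M.Hom Γ' B :=
  _root_.cast (congrArg (fun l => M.Hom l B) h) t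

/-- A multimap `u : Γ → A` is central if substituting it and any other multimap into any third
multimap can be done in either order (in both relative positions). -/
def Central {Γ : List M.Obj} {A : M.Obj} (u : M.Hom Γ A) : Prop :=
  (∀ (Δ₁ Δ₂ Δ₃ : List M.Obj) (B : M.Obj) {C : M.Obj}
      (t : M.Hom (Δ₁ ++ (A :: (Δ₂ ++ (B :: Δ₃)))) C) (Λ : List M.Obj) (v : M.Hom Λ B),
      M.cst (by simp)
          (M.subst (Δ₁ ++ (Γ ++ Δ₂)) B Δ₃
            (M.cst (by simp) (M.subst Δ₁ A (Δ₂ ++ (B :: Δ₃)) t u)) v)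
        = M.subst Δ₁ A (Δ₂ ++ (Λ ++ Δ₃))
            (M.cst (by simp) (M.subst (Δ₁ ++ (A :: Δ₂)) B Δ₃ (M.cst (by simp) t) v)) u)
  ∧ (∀ (Δ₁ Δ₂ Δ₃ : List M.Obj) (B : M.Obj) {C : M.Obj}
      (t' : M.Hom (Δ₁ ++ (B :: (Δ₂ ++ (A :: Δ₃)))) C) (Λ : List M.Obj) (v : M.Hom Λ B),
      M.cst (by simp)
          (M.subst Δ₁ B (Δ₂ ++ (Γ ++ Δ₃))
            (M.cst (by simp) (M.subst (Δ₁ ++ (B :: Δ₂)) A Δ₃ (M.cst (by simp) t') u)) v)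
        = M.subst (Δ₁ ++ (Λ ++ Δ₂)) A Δ₃
            (M.cst (by simp) (M.subst Δ₁ B (Δ₂ ++ (A :: Δ₃)) (M.cst (by simp) t') v)) u)

end PreMulticat

namespace PreMulticat

variable (M : PreMulticat.{u, v})

/-- The data of a single substitution: a multimap `hom : src → tgt` to be plugged in. -/
structure Sub : Type (max u v) where
  tgt : M.Obj
  src : List M.Obj
  hom : M.Hom src tgt

variable {M}

/-- The context `A₁,…,Aₙ,Γ'` of targets of a list of substitutions, followed by `Γ'`. -/
def objCtx : List M.Sub → List M.Obj → List M.Obj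
  | [], Γ' => Γ'
  | s :: L, Γ' => s.tgt :: objCtx L Γ'

/-- The context `Δ₁,…,Δₙ,Γ'` of sources of a list of substitutions, followed by `Γ'`. -/
def newCtx : List M.Sub → List M.Obj → List M.Obj
  | [], Γ' => Γ'
  | s :: L, Γ' => s.src ++ newCtx L Γ'

@[simp] theorem objCtx_nil (Γ' : List M.Obj) : objCtx ([] : List M.Sub) Γ' = Γ' := rfl

@[simp] theorem objCtx_cons (s : M.Sub) (L : List M.Sub) (Γ' : List M.Obj) :
    objCtx (s :: L) Γ' = s.tgt :: objCtx L Γ' := rfl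

@[simp] theorem newCtx_nil (Γ' : List M.Obj) : newCtx ([] : List M.Sub) Γ' = Γ' := rfl

@[simp] theorem newCtx_cons (s : M.Sub) (L : List M.Sub) (Γ' : List M.Obj) :
    newCtx (s :: L) Γ' = s.src ++ newCtx L Γ' := rfl

@[simp] theorem objCtx_eq (L : List M.Sub) (Γ' : List M.Obj) :
    objCtx L Γ' = L.map Sub.tgt ++ Γ' := by
  induction L with
  | nil => rfl
  | cons s L ih => simp [ih]

@[simp] theorem newCtx_eq (L : List M.Sub) (Γ' : List M.Obj) :
    newCtx L Γ' = (L.map Sub.src).flatten ++ Γ' := by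
  induction L with
  | nil => rfl
  | cons s L ih => simp [ih]

/-- Iterated substitution `t⟨Γ, u₁, …, uₙ, Γ'⟩`, defined recursively by substituting the last
multimap of the list `L` (the paper's recursion): `t⟨Γ,u₁,Γ'⟩ = t[Γ,u₁,Γ']` and
`t⟨Γ,u₁,…,uₙ,Γ'⟩ = t⟨Γ,u₁,…,u_{n-1},Aₙ,Γ'⟩[Γ,Δ₁,…,Δ_{n-1},uₙ,Γ']`. -/
def isub (Γ : List M.Obj) (L : List M.Sub) :
    ∀ (Γ' : List M.Obj) {B : M.Obj}, M.Hom (Γ ++ objCtx L Γ') B → M.Hom (Γ ++ newCtx L Γ') B :=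
  L.reverseRecOn (motive := fun L => ∀ (Γ' : List M.Obj) {B : M.Obj},
      M.Hom (Γ ++ objCtx L Γ') B → M.Hom (Γ ++ newCtx L Γ') B)
    (fun _ _ t => t)
    (fun L s ih Γ' _ t =>
      M.cst (by simp)
        (M.subst (Γ ++ newCtx L []) s.tgt Γ'
          (M.cst (by simp) (ih (s.tgt :: Γ') (M.cst (by simp) t))) s.hom))

end PreMulticat

namespace PreMulticat

/-- The data of a grouped substitution: a multimap `hom : A¹,…,Aᵏ → tgt` together with a
further list `inner` of substitutions `vʲ : Δʲ → Aʲ` into its sources. -/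
structure GSub (M : PreMulticat.{u, v}) : Type (max u v) where
  tgt : M.Obj
  inner : List M.Sub
  hom : M.Hom (objCtx inner []) tgt

/-- The substitution datum `(tgt, u)` given by the multimap of a group. -/
def GSub.toOuter {M : PreMulticat.{u, v}} (g : M.GSub) : M.Sub :=
  ⟨g.tgt, objCtx g.inner [], g.hom⟩

/-- The substitution datum `(tgt, u⟨v¹,…,vᵏ⟩)` given by the iterated substitution of the inner
substitutions into the multimap of a group. -/
def GSub.toCollapsed {M : PreMulticat.{u, v}} (g : M.GSub) : M.Sub :=
  ⟨g.tgt, newCtx g.inner [], isub [] g.inner [] g.hom⟩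

@[simp] theorem GSub.toOuter_tgt {M : PreMulticat.{u, v}} (g : M.GSub) :
    g.toOuter.tgt = g.tgt := rfl
@[simp] theorem GSub.toOuter_src {M : PreMulticat.{u, v}} (g : M.GSub) :
    g.toOuter.src = objCtx g.inner [] := rfl
@[simp] theorem GSub.toCollapsed_tgt {M : PreMulticat.{u, v}} (g : M.GSub) :
    g.toCollapsed.tgt = g.tgt := rfl
@[simp] theorem GSub.toCollapsed_src {M : PreMulticat.{u, v}} (g : M.GSub) :
    g.toCollapsed.src = newCtx g.inner [] := rfl

end PreMulticat

namespace PreMulticat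

variable {M : PreMulticat.{u, v}}

theorem cst_heq {Γ Γ' : List M.Obj} {B : M.Obj} (h : Γ = Γ') (t : M.Hom Γ B) :
    HEq (M.cst h t) t := by
  subst h; rfl

theorem subst_hcongr {Γ₁ Γ₂ Γ₁' Γ₂' : List M.Obj} {A B : M.Obj}
    (hΓ : Γ₁ = Γ₂) (hΓ' : Γ₁' = Γ₂')
    {t₁ : M.Hom (Γ₁ ++ (A :: Γ₁')) B} {t₂ : M.Hom (Γ₂ ++ (A :: Γ₂')) B} (ht : HEq t₁ t₂)
    {Δ₁ Δ₂ : List M.Obj} (hΔ : Δ₁ = Δ₂) {u₁ : M.Hom Δ₁ A} {u₂ : M.Hom Δ₂ A} (hu : HEq u₁ u₂) :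
    HEq (M.subst Γ₁ A Γ₁' t₁ u₁) (M.subst Γ₂ A Γ₂' t₂ u₂) := by
  subst hΓ; subst hΓ'; subst hΔ; rw [eq_of_heq ht, eq_of_heq hu]

theorem isub_hcongr {Γ₁ Γ₂ Γ₁' Γ₂' : List M.Obj} {L : List M.Sub} {B : M.Obj}
    (hΓ : Γ₁ = Γ₂) (hΓ' : Γ₁' = Γ₂')
    {t₁ : M.Hom (Γ₁ ++ objCtx L Γ₁') B} {t₂ : M.Hom (Γ₂ ++ objCtx L Γ₂') B} (ht : HEq t₁ t₂) :
    HEq (isub Γ₁ L Γ₁' t₁) (isub Γ₂ L Γ₂' t₂) := by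
  subst hΓ; subst hΓ'; rw [eq_of_heq ht]

theorem isub_nil' {Γ Γ' : List M.Obj} {B : M.Obj} (t : M.Hom (Γ ++ objCtx [] Γ') B) :
    isub Γ ([] : List M.Sub) Γ' t = t := by
  unfold isub; erw [List.reverseRecOn_nil]

theorem isub_concat_fun (Γ : List M.Obj) (L : List M.Sub) (s : M.Sub) :
    (isub Γ (L ++ [s]) : ∀ Γ' {B}, M.Hom (Γ ++ objCtx (L ++ [s]) Γ') B →
        M.Hom (Γ ++ newCtx (L ++ [s]) Γ') B)
      = fun Γ' {B} t =>
        M.cst (by simp)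
          (M.subst (Γ ++ newCtx L []) s.tgt Γ'
            (M.cst (by simp) (isub Γ L (s.tgt :: Γ') (M.cst (by simp) t))) s.hom) := by
  unfold isub
  erw [List.reverseRecOn_concat]

theorem isub_snoc {Γ Γ' : List M.Obj} {L : List M.Sub} {s : M.Sub} {B : M.Obj}
    {t : M.Hom (Γ ++ objCtx (L ++ [s]) Γ') B} {t' : M.Hom (Γ ++ objCtx L (s.tgt :: Γ')) B}
    (ht : HEq t t')
    {t'' : M.Hom ((Γ ++ newCtx L []) ++ (s.tgt :: Γ')) B}
    (ht'' : HEq t'' (isub Γ L (s.tgt :: Γ') t')) :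
    HEq (isub Γ (L ++ [s]) Γ' t)
      (M.subst (Γ ++ newCtx L []) s.tgt Γ' t'' s.hom) := by
  have h2 : isub Γ (L ++ [s]) Γ' t
      = M.cst (by simp)
          (M.subst (Γ ++ newCtx L []) s.tgt Γ'
            (M.cst (by simp) (isub Γ L (s.tgt :: Γ') (M.cst (by simp) t))) s.hom) := by
    rw [isub_concat_fun]
  rw [h2]
  refine HEq.trans (cst_heq _ _) ?_
  refine subst_hcongr rfl rfl ?_ rfl HEq.rfl
  refine HEq.trans (cst_heq _ _) (HEq.trans (isub_hcongr rfl rfl (HEq.trans (cst_heq _ _) ht)) ht''.symm)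

theorem isub_cons {Γ : List M.Obj} {s : M.Sub} (L : List M.Sub) :
    ∀ (Γ' : List M.Obj) {B : M.Obj} (t : M.Hom (Γ ++ objCtx (s :: L) Γ') B)
      (t' : M.Hom ((Γ ++ s.src) ++ objCtx L Γ') B),
      HEq t' (M.subst Γ s.tgt (objCtx L Γ') t s.hom) →
      HEq (isub Γ (s :: L) Γ' t) (isub (Γ ++ s.src) L Γ' t') := by
  induction L using List.reverseRecOn with
  | nil =>
    intro Γ' B t t' ht'
    have h1 : HEq (isub Γ (s :: ([] : List M.Sub)) Γ' t)
        (M.subst (Γ ++ newCtx ([] : List M.Sub) []) s.tgt Γ' (M.cst (by simp) t) s.hom) :=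
      isub_snoc (L := ([] : List M.Sub)) HEq.rfl
        ((cst_heq _ t).trans (heq_of_eq (isub_nil' t)).symm)
    refine h1.trans ?_
    refine HEq.trans (subst_hcongr (by simp) rfl (cst_heq _ t) rfl HEq.rfl) ?_
    rw [isub_nil']
    exact ht'.symm
  | append_singleton L₀ s' ih =>
    intro Γ' B t t' ht'
    have h1 : HEq (isub Γ (s :: (L₀ ++ [s'])) Γ' t)
        (M.subst (Γ ++ newCtx (s :: L₀) []) s'.tgt Γ'
          (M.cst (by simp) (isub Γ (s :: L₀) (s'.tgt :: Γ') (M.cst (by simp) t))) s'.hom) :=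
      isub_snoc (L := s :: L₀) (cst_heq _ t).symm (cst_heq _ _)
    refine h1.trans ?_
    have h2 : HEq (isub Γ (s :: L₀) (s'.tgt :: Γ') (M.cst (by simp) t))
        (isub (Γ ++ s.src) L₀ (s'.tgt :: Γ')
          (M.cst (by simp)
            (M.subst Γ s.tgt (objCtx L₀ (s'.tgt :: Γ')) (M.cst (by simp) t) s.hom))) :=
      ih (s'.tgt :: Γ') (M.cst (by simp) t) _ (cst_heq _ _)
    have h3 : HEq t'
        (M.subst Γ s.tgt (objCtx L₀ (s'.tgt :: Γ')) (M.cst (by simp) t) s.hom) :=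
      ht'.trans (subst_hcongr rfl (by simp) (cst_heq _ t).symm rfl HEq.rfl)
    have h4 : HEq (isub (Γ ++ s.src) (L₀ ++ [s']) Γ' t')
        (M.subst ((Γ ++ s.src) ++ newCtx L₀ []) s'.tgt Γ'
          (M.cst (by simp) (isub (Γ ++ s.src) L₀ (s'.tgt :: Γ') (M.cst (by simp) t'))) s'.hom) :=
      isub_snoc (cst_heq _ t').symm (cst_heq _ _)
    refine HEq.trans ?_ h4.symm
    refine subst_hcongr (by simp) rfl ?_ rfl HEq.rfl
    refine (cst_heq _ _).trans (HEq.trans (h2.trans ?_) (cst_heq _ _).symm)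
    exact isub_hcongr rfl rfl ((cst_heq _ _).trans (h3.symm.trans (cst_heq _ t').symm))

theorem isub_append (L₁ : List M.Sub) :
    ∀ (Γ : List M.Obj) (L₂ : List M.Sub) (Γ' : List M.Obj) {B : M.Obj}
      (t : M.Hom (Γ ++ objCtx (L₁ ++ L₂) Γ') B)
      (t' : M.Hom (Γ ++ objCtx L₁ (objCtx L₂ Γ')) B), HEq t t' →
      ∀ (t'' : M.Hom ((Γ ++ newCtx L₁ []) ++ objCtx L₂ Γ') B),
      HEq t'' (isub Γ L₁ (objCtx L₂ Γ') t') →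
      HEq (isub Γ (L₁ ++ L₂) Γ' t) (isub (Γ ++ newCtx L₁ []) L₂ Γ' t'') := by
  induction L₁ with
  | nil =>
    intro Γ L₂ Γ' B t t' ht t'' ht''
    rw [isub_nil'] at ht''
    exact isub_hcongr
      (show Γ = Γ ++ newCtx ([] : List M.Sub) [] by simp).symm.symm rfl (ht.trans ht''.symm)
  | cons s L₁' ih =>
    intro Γ L₂ Γ' B t t' ht t'' ht''
    have h1 : HEq (isub Γ (s :: (L₁' ++ L₂)) Γ' t)
        (isub (Γ ++ s.src) (L₁' ++ L₂) Γ'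
          (M.cst (by simp) (M.subst Γ s.tgt (objCtx (L₁' ++ L₂) Γ') t s.hom))) :=
      isub_cons _ _ _ _ (cst_heq _ _)
    refine h1.trans ?_
    have h2 := ih (Γ ++ s.src) L₂ Γ'
      (M.cst (by simp) (M.subst Γ s.tgt (objCtx (L₁' ++ L₂) Γ') t s.hom))
      (M.cst (by simp) (M.subst Γ s.tgt (objCtx L₁' (objCtx L₂ Γ')) t' s.hom))
      ((cst_heq _ _).trans (HEq.trans (subst_hcongr rfl (by simp) ht rfl HEq.rfl)
        (cst_heq _ _).symm))
      (M.cst (by simp) (isub (Γ ++ s.src) L₁' (objCtx L₂ Γ')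
        (M.cst (by simp) (M.subst Γ s.tgt (objCtx L₁' (objCtx L₂ Γ')) t' s.hom))))
      (cst_heq _ _)
    refine h2.trans ?_
    -- match with goal RHS
    have h3 : HEq (isub Γ (s :: L₁') (objCtx L₂ Γ') t')
        (isub (Γ ++ s.src) L₁' (objCtx L₂ Γ')
          (M.cst (by simp) (M.subst Γ s.tgt (objCtx L₁' (objCtx L₂ Γ')) t' s.hom))) :=
      isub_cons _ _ _ _ (cst_heq _ _)
    refine isub_hcongr (by simp) rfl ?_
    exact (cst_heq _ _).trans (h3.symm.trans ht''.symm)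

theorem subst_assoc' {Γ₁ Γ₁' Γ₂ Γ₂' Δ : List M.Obj} {A B C : M.Obj}
    (t : M.Hom (Γ₁ ++ (B :: Γ₁')) C) (u : M.Hom (Γ₂ ++ (A :: Γ₂')) B) (v : M.Hom Δ A)
    {t₁ : M.Hom ((Γ₁ ++ Γ₂) ++ (A :: (Γ₂' ++ Γ₁'))) C}
    (h : HEq t₁ (M.subst Γ₁ B Γ₁' t u)) :
    HEq (M.subst (Γ₁ ++ Γ₂) A (Γ₂' ++ Γ₁') t₁ v)
      (M.subst Γ₁ B Γ₁' t (M.subst Γ₂ A Γ₂' u v)) := by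
  have h1 : t₁ = _root_.cast (congrArg (fun l => M.Hom l C) (by simp)) (M.subst Γ₁ B Γ₁' t u) :=
    eq_of_heq (h.trans (cast_heq _ _).symm)
  rw [h1]
  exact heq_of_eq_of_heq (M.subst_assoc Γ₁ B Γ₁' t Γ₂ A Γ₂' u v) (cast_heq _ _)

theorem subst_isub {Γ Γ' : List M.Obj} {A B : M.Obj} (t : M.Hom (Γ ++ (A :: Γ')) B)
    (L : List M.Sub) :
    ∀ (Λ : List M.Obj) (u : M.Hom (objCtx L Λ) A)
      (t' : M.Hom (Γ ++ objCtx L (Λ ++ Γ')) B),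
      HEq t' (M.subst Γ A Γ' t u) →
      HEq (M.subst Γ A Γ' t (isub ([] : List M.Obj) L Λ u)) (isub Γ L (Λ ++ Γ') t') := by
  induction L using List.reverseRecOn with
  | nil =>
    intro Λ u t' ht'
    rw [isub_nil', isub_nil']
    exact ht'.symm
  | append_singleton L₀ s ih =>
    intro Λ u t' ht'
    obtain ⟨u', hu'⟩ : ∃ u' : M.Hom (([] : List M.Obj) ++ objCtx L₀ (s.tgt :: Λ)) A, HEq u' u :=
      ⟨M.cst (by simp) u, cst_heq _ u⟩
    obtain ⟨w, hw⟩ : ∃ w : M.Hom ((([] : List M.Obj) ++ newCtx L₀ []) ++ (s.tgt :: Λ)) A,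
        HEq w (isub ([] : List M.Obj) L₀ (s.tgt :: Λ) u') := ⟨M.cst (by simp) _, cst_heq _ _⟩
    have h1 : HEq (isub ([] : List M.Obj) (L₀ ++ [s]) Λ u)
        (M.subst (([] : List M.Obj) ++ newCtx L₀ []) s.tgt Λ w s.hom) :=
      isub_snoc hu'.symm hw
    have h2 : HEq (M.subst Γ A Γ' t (isub ([] : List M.Obj) (L₀ ++ [s]) Λ u))
        (M.subst Γ A Γ' t (M.subst (([] : List M.Obj) ++ newCtx L₀ []) s.tgt Λ w s.hom)) :=
      subst_hcongr rfl rfl HEq.rfl (by simp) h1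
    obtain ⟨T, hT⟩ :
        ∃ T : M.Hom ((Γ ++ (([] : List M.Obj) ++ newCtx L₀ [])) ++ (s.tgt :: (Λ ++ Γ'))) B,
        HEq T (M.subst Γ A Γ' t w) := ⟨M.cst (by simp) _, cst_heq _ _⟩
    have h3 : HEq (M.subst (Γ ++ (([] : List M.Obj) ++ newCtx L₀ [])) s.tgt (Λ ++ Γ') T s.hom)
        (M.subst Γ A Γ' t (M.subst (([] : List M.Obj) ++ newCtx L₀ []) s.tgt Λ w s.hom)) :=
      subst_assoc' t w s.hom hT
    refine (h2.trans h3.symm).trans ?_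
    obtain ⟨t₀, ht₀⟩ : ∃ t₀ : M.Hom (Γ ++ objCtx L₀ ((s.tgt :: Λ) ++ Γ')) B,
        HEq t₀ (M.subst Γ A Γ' t u') := ⟨M.cst (by simp) _, cst_heq _ _⟩
    have h5 := ih (s.tgt :: Λ) u' t₀ ht₀
    obtain ⟨t₁', ht₁'⟩ : ∃ t₁' : M.Hom (Γ ++ objCtx L₀ (s.tgt :: (Λ ++ Γ'))) B, HEq t₁' t' :=
      ⟨M.cst (by simp) _, cst_heq _ _⟩
    obtain ⟨t₂', ht₂'⟩ : ∃ t₂' : M.Hom ((Γ ++ newCtx L₀ []) ++ (s.tgt :: (Λ ++ Γ'))) B,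
        HEq t₂' (isub Γ L₀ (s.tgt :: (Λ ++ Γ')) t₁') := ⟨M.cst (by simp) _, cst_heq _ _⟩
    have h6 : HEq (isub Γ (L₀ ++ [s]) (Λ ++ Γ') t')
        (M.subst (Γ ++ newCtx L₀ []) s.tgt (Λ ++ Γ') t₂' s.hom) := isub_snoc ht₁'.symm ht₂'
    refine HEq.trans ?_ h6.symm
    refine subst_hcongr (by simp) rfl ?_ rfl HEq.rfl
    refine hT.trans ?_
    refine (subst_hcongr rfl rfl HEq.rfl (by simp) hw).trans ?_
    refine h5.trans ?_
    refine HEq.trans ?_ ht₂'.symm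
    refine isub_hcongr rfl (by simp) ?_
    exact ht₀.trans ((subst_hcongr rfl rfl HEq.rfl (by simp) hu').trans (ht'.symm.trans ht₁'.symm))

theorem isub_hcongr' {Γ₁ Γ₂ Γ₁' Γ₂' : List M.Obj} {L₁ L₂ : List M.Sub} {B : M.Obj}
    (hΓ : Γ₁ = Γ₂) (hL : L₁ = L₂) (hΓ' : Γ₁' = Γ₂')
    {t₁ : M.Hom (Γ₁ ++ objCtx L₁ Γ₁') B} {t₂ : M.Hom (Γ₂ ++ objCtx L₂ Γ₂') B} (ht : HEq t₁ t₂) :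
    HEq (isub Γ₁ L₁ Γ₁' t₁) (isub Γ₂ L₂ Γ₂' t₂) := by
  subst hΓ; subst hL; subst hΓ'; rw [eq_of_heq ht]

theorem central_swap₁ {Λu : List M.Obj} {A : M.Obj} {u : M.Hom Λu A} (hu : M.Central u)
    (Δ₁ Δ₂ Δ₃ : List M.Obj) (B : M.Obj) {C : M.Obj}
    (t : M.Hom (Δ₁ ++ (A :: (Δ₂ ++ (B :: Δ₃)))) C) {Λv : List M.Obj} (v : M.Hom Λv B)
    {t₁ : M.Hom ((Δ₁ ++ (Λu ++ Δ₂)) ++ (B :: Δ₃)) C}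
    (h₁ : HEq t₁ (M.subst Δ₁ A (Δ₂ ++ (B :: Δ₃)) t u))
    {t₂ : M.Hom ((Δ₁ ++ (A :: Δ₂)) ++ (B :: Δ₃)) C} (h₂ : HEq t₂ t)
    {t₃ : M.Hom (Δ₁ ++ (A :: (Δ₂ ++ (Λv ++ Δ₃)))) C}
    (h₃ : HEq t₃ (M.subst (Δ₁ ++ (A :: Δ₂)) B Δ₃ t₂ v)) :
    HEq (M.subst (Δ₁ ++ (Λu ++ Δ₂)) B Δ₃ t₁ v) (M.subst Δ₁ A (Δ₂ ++ (Λv ++ Δ₃)) t₃ u) := by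
  have e := hu.1 Δ₁ Δ₂ Δ₃ B t Λv v
  refine HEq.trans (subst_hcongr rfl rfl (h₁.trans (cst_heq _ _).symm) rfl HEq.rfl)
    (HEq.trans ((cst_heq _ _).symm.trans (heq_of_eq e)) ?_)
  refine subst_hcongr rfl rfl ?_ rfl HEq.rfl
  refine (cst_heq _ _).trans ?_
  exact (subst_hcongr rfl rfl ((cst_heq _ t).trans h₂.symm) rfl HEq.rfl).trans h₃.symm

theorem central_swap₂ {Λu : List M.Obj} {A : M.Obj} {u : M.Hom Λu A} (hu : M.Central u)
    (Δ₁ Δ₂ Δ₃ : List M.Obj) (B : M.Obj) {C : M.Obj}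
    (t : M.Hom (Δ₁ ++ (B :: (Δ₂ ++ (A :: Δ₃)))) C) {Λv : List M.Obj} (v : M.Hom Λv B)
    {t₁ : M.Hom ((Δ₁ ++ (B :: Δ₂)) ++ (A :: Δ₃)) C} (h₁ : HEq t₁ t)
    {t₂ : M.Hom (Δ₁ ++ (B :: (Δ₂ ++ (Λu ++ Δ₃)))) C}
    (h₂ : HEq t₂ (M.subst (Δ₁ ++ (B :: Δ₂)) A Δ₃ t₁ u))
    {t₃ : M.Hom ((Δ₁ ++ (Λv ++ Δ₂)) ++ (A :: Δ₃)) C}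
    (h₃ : HEq t₃ (M.subst Δ₁ B (Δ₂ ++ (A :: Δ₃)) t v)) :
    HEq (M.subst Δ₁ B (Δ₂ ++ (Λu ++ Δ₃)) t₂ v) (M.subst (Δ₁ ++ (Λv ++ Δ₂)) A Δ₃ t₃ u) := by
  have e := hu.2 Δ₁ Δ₂ Δ₃ B t Λv v
  refine HEq.trans (subst_hcongr rfl rfl
      (h₂.trans ((subst_hcongr rfl rfl (h₁.trans (cst_heq _ t).symm) rfl HEq.rfl).trans
        (cst_heq _ _).symm)) rfl HEq.rfl)
    (HEq.trans ((cst_heq _ _).symm.trans (heq_of_eq e)) ?_)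
  refine subst_hcongr rfl rfl ?_ rfl HEq.rfl
  refine (cst_heq _ _).trans ?_
  exact (subst_hcongr rfl rfl (cst_heq _ t) rfl HEq.rfl).trans h₃.symm

/-- A central multimap substituted to the left of a block commutes past substituting the
whole block. -/
theorem central_subst_isub {Λu : List M.Obj} {A : M.Obj} {u : M.Hom Λu A} (hu : M.Central u)
    (Γ : List M.Obj) (R : List M.Sub) :
    ∀ (Δ Γ' : List M.Obj) {C : M.Obj} (t : M.Hom (Γ ++ (A :: (Δ ++ objCtx R Γ'))) C)
      (t₁ : M.Hom ((Γ ++ (Λu ++ Δ)) ++ objCtx R Γ') C),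
      HEq t₁ (M.subst Γ A (Δ ++ objCtx R Γ') t u) →
      ∀ (t₂ : M.Hom ((Γ ++ (A :: Δ)) ++ objCtx R Γ') C), HEq t₂ t →
      ∀ (t₃ : M.Hom (Γ ++ (A :: (Δ ++ newCtx R Γ'))) C),
      HEq t₃ (isub (Γ ++ (A :: Δ)) R Γ' t₂) →
      HEq (isub (Γ ++ (Λu ++ Δ)) R Γ' t₁) (M.subst Γ A (Δ ++ newCtx R Γ') t₃ u) := by
  induction R with
  | nil =>
    intro Δ Γ' C t t₁ h₁ t₂ h₂ t₃ h₃
    rw [isub_nil'] at h₃ ⊢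
    exact h₁.trans (subst_hcongr rfl rfl (h₃.trans h₂).symm rfl HEq.rfl)
  | cons s R' ih =>
    intro Δ Γ' C t t₁ h₁ t₂ h₂ t₃ h₃
    obtain ⟨q, hq⟩ : ∃ q : M.Hom (((Γ ++ (Λu ++ Δ)) ++ s.src) ++ objCtx R' Γ') C,
        HEq q (M.subst (Γ ++ (Λu ++ Δ)) s.tgt (objCtx R' Γ') t₁ s.hom) :=
      ⟨M.cst (by simp) _, cst_heq _ _⟩
    refine HEq.trans (isub_cons _ _ _ _ hq) ?_
    obtain ⟨t₃', ht₃'⟩ : ∃ t₃' : M.Hom (Γ ++ (A :: (Δ ++ (s.src ++ objCtx R' Γ')))) C,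
        HEq t₃' (M.subst (Γ ++ (A :: Δ)) s.tgt (objCtx R' Γ') t₂ s.hom) :=
      ⟨M.cst (by simp) _, cst_heq _ _⟩
    have hswap : HEq (M.subst (Γ ++ (Λu ++ Δ)) s.tgt (objCtx R' Γ') t₁ s.hom)
        (M.subst Γ A (Δ ++ (s.src ++ objCtx R' Γ')) t₃' u) :=
      central_swap₁ hu Γ Δ (objCtx R' Γ') s.tgt t s.hom h₁ h₂ ht₃'
    obtain ⟨tc, htc⟩ : ∃ tc : M.Hom (Γ ++ (A :: ((Δ ++ s.src) ++ objCtx R' Γ'))) C,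
        HEq tc t₃' := ⟨M.cst (by simp) _, cst_heq _ _⟩
    obtain ⟨q₁, hq₁⟩ : ∃ q₁ : M.Hom ((Γ ++ (Λu ++ (Δ ++ s.src))) ++ objCtx R' Γ') C,
        HEq q₁ q := ⟨M.cst (by simp) _, cst_heq _ _⟩
    obtain ⟨d₂, hd₂⟩ : ∃ d₂ : M.Hom ((Γ ++ (A :: (Δ ++ s.src))) ++ objCtx R' Γ') C,
        HEq d₂ tc := ⟨M.cst (by simp) _, cst_heq _ _⟩
    obtain ⟨d₃, hd₃⟩ : ∃ d₃ : M.Hom (Γ ++ (A :: ((Δ ++ s.src) ++ newCtx R' Γ'))) C,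
        HEq d₃ (isub (Γ ++ (A :: (Δ ++ s.src))) R' Γ' d₂) := ⟨M.cst (by simp) _, cst_heq _ _⟩
    have hih := ih (Δ ++ s.src) Γ' tc q₁
      (hq₁.trans (hq.trans (hswap.trans
        (subst_hcongr rfl (by simp) htc.symm rfl HEq.rfl))))
      d₂ hd₂ d₃ hd₃
    refine HEq.trans (isub_hcongr (by simp) rfl hq₁.symm) (hih.trans ?_)
    refine subst_hcongr rfl (by simp) ?_ rfl HEq.rfl
    obtain ⟨e₂, he₂⟩ : ∃ e₂ : M.Hom (((Γ ++ (A :: Δ)) ++ s.src) ++ objCtx R' Γ') C,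
        HEq e₂ (M.subst (Γ ++ (A :: Δ)) s.tgt (objCtx R' Γ') t₂ s.hom) :=
      ⟨M.cst (by simp) _, cst_heq _ _⟩
    have hc : HEq (isub (Γ ++ (A :: Δ)) (s :: R') Γ' t₂)
        (isub ((Γ ++ (A :: Δ)) ++ s.src) R' Γ' e₂) := isub_cons _ _ _ _ he₂
    refine hd₃.trans ?_
    refine HEq.trans ?_ (h₃.trans hc).symm
    refine isub_hcongr (by simp) rfl ?_
    exact hd₂.trans (htc.trans (ht₃'.trans he₂.symm))

/-- A central multimap substituted to the right of a block commutes past substituting the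
whole block. -/
theorem isub_subst_central {Λu : List M.Obj} {A : M.Obj} {u : M.Hom Λu A} (hu : M.Central u)
    (L : List M.Sub) :
    ∀ (Γ Δ Γ' : List M.Obj) {C : M.Obj} (t : M.Hom (Γ ++ objCtx L (Δ ++ (A :: Γ'))) C)
      (t₁ : M.Hom ((Γ ++ (newCtx L [] ++ Δ)) ++ (A :: Γ')) C),
      HEq t₁ (isub Γ L (Δ ++ (A :: Γ')) t) →
      ∀ (t₂ : M.Hom ((Γ ++ (objCtx L [] ++ Δ)) ++ (A :: Γ')) C), HEq t₂ t →
      ∀ (t₃ : M.Hom (Γ ++ objCtx L (Δ ++ (Λu ++ Γ'))) C),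
      HEq t₃ (M.subst (Γ ++ (objCtx L [] ++ Δ)) A Γ' t₂ u) →
      HEq (M.subst (Γ ++ (newCtx L [] ++ Δ)) A Γ' t₁ u) (isub Γ L (Δ ++ (Λu ++ Γ')) t₃) := by
  induction L with
  | nil =>
    intro Γ Δ Γ' C t t₁ h₁ t₂ h₂ t₃ h₃
    rw [isub_nil'] at h₁
    rw [isub_nil']
    exact (subst_hcongr rfl rfl (h₁.trans h₂.symm) rfl HEq.rfl).trans h₃.symm
  | cons s L' ih =>
    intro Γ Δ Γ' C t t₁ h₁ t₂ h₂ t₃ h₃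
    obtain ⟨q, hq⟩ : ∃ q : M.Hom ((Γ ++ s.src) ++ objCtx L' (Δ ++ (A :: Γ'))) C,
        HEq q (M.subst Γ s.tgt (objCtx L' (Δ ++ (A :: Γ'))) t s.hom) :=
      ⟨M.cst (by simp) _, cst_heq _ _⟩
    have hcons : HEq (isub Γ (s :: L') (Δ ++ (A :: Γ')) t)
        (isub (Γ ++ s.src) L' (Δ ++ (A :: Γ')) q) := isub_cons _ _ _ _ hq
    obtain ⟨p₁, hp₁⟩ : ∃ p₁ : M.Hom (((Γ ++ s.src) ++ (newCtx L' [] ++ Δ)) ++ (A :: Γ')) C,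
        HEq p₁ t₁ := ⟨M.cst (by simp) _, cst_heq _ _⟩
    obtain ⟨p₂, hp₂⟩ : ∃ p₂ : M.Hom (((Γ ++ s.src) ++ (objCtx L' [] ++ Δ)) ++ (A :: Γ')) C,
        HEq p₂ q := ⟨M.cst (by simp) _, cst_heq _ _⟩
    obtain ⟨p₃, hp₃⟩ : ∃ p₃ : M.Hom ((Γ ++ s.src) ++ objCtx L' (Δ ++ (Λu ++ Γ'))) C,
        HEq p₃ (M.subst ((Γ ++ s.src) ++ (objCtx L' [] ++ Δ)) A Γ' p₂ u) :=
      ⟨M.cst (by simp) _, cst_heq _ _⟩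
    have hih := ih (Γ ++ s.src) Δ Γ' q p₁ (hp₁.trans (h₁.trans hcons)) p₂ hp₂ p₃ hp₃
    refine HEq.trans (subst_hcongr (by simp) rfl hp₁.symm rfl HEq.rfl) ?_
    refine hih.trans ?_
    obtain ⟨r, hr⟩ : ∃ r : M.Hom ((Γ ++ s.src) ++ objCtx L' (Δ ++ (Λu ++ Γ'))) C,
        HEq r (M.subst Γ s.tgt (objCtx L' (Δ ++ (Λu ++ Γ'))) t₃ s.hom) :=
      ⟨M.cst (by simp) _, cst_heq _ _⟩
    refine HEq.trans ?_ (isub_cons _ _ _ _ hr).symm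
    refine isub_hcongr rfl rfl ?_
    obtain ⟨T, hT⟩ : ∃ T : M.Hom (Γ ++ (s.tgt :: ((objCtx L' [] ++ Δ) ++ (A :: Γ')))) C,
        HEq T t := ⟨M.cst (by simp) _, cst_heq _ _⟩
    obtain ⟨X₁, hX₁⟩ : ∃ X₁ : M.Hom ((Γ ++ (s.tgt :: (objCtx L' [] ++ Δ))) ++ (A :: Γ')) C,
        HEq X₁ T := ⟨M.cst (by simp) _, cst_heq _ _⟩
    obtain ⟨X₂, hX₂⟩ : ∃ X₂ : M.Hom (Γ ++ (s.tgt :: ((objCtx L' [] ++ Δ) ++ (Λu ++ Γ')))) C,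
        HEq X₂ (M.subst (Γ ++ (s.tgt :: (objCtx L' [] ++ Δ))) A Γ' X₁ u) :=
      ⟨M.cst (by simp) _, cst_heq _ _⟩
    obtain ⟨X₃, hX₃⟩ : ∃ X₃ : M.Hom ((Γ ++ (s.src ++ (objCtx L' [] ++ Δ))) ++ (A :: Γ')) C,
        HEq X₃ (M.subst Γ s.tgt ((objCtx L' [] ++ Δ) ++ (A :: Γ')) T s.hom) :=
      ⟨M.cst (by simp) _, cst_heq _ _⟩
    have hswap := central_swap₂ hu Γ (objCtx L' [] ++ Δ) Γ' s.tgt T s.hom hX₁ hX₂ hX₃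
    have hp₃X : HEq p₃ (M.subst (Γ ++ (s.src ++ (objCtx L' [] ++ Δ))) A Γ' X₃ u) := by
      refine hp₃.trans (subst_hcongr (by simp) rfl ?_ rfl HEq.rfl)
      exact hp₂.trans (hq.trans ((subst_hcongr rfl (by simp) hT.symm rfl HEq.rfl).trans hX₃.symm))
    refine hp₃X.trans (HEq.trans hswap.symm ?_)
    refine HEq.trans (subst_hcongr rfl (by simp) ?_ rfl HEq.rfl) hr.symm
    refine hX₂.trans ?_
    refine HEq.trans (subst_hcongr (by simp) rfl ?_ rfl HEq.rfl) h₃.symm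
    exact hX₁.trans (hT.trans h₂.symm)

/-- One central block at the left (all of whose multimaps are central) commutes past
substituting an arbitrary block at the right. -/
theorem isub_isub_swap (L : List M.Sub) :
    (∀ s ∈ L, M.Central s.hom) →
    ∀ (R : List M.Sub) (Γ Γ' : List M.Obj) {C : M.Obj}
      (t : M.Hom (Γ ++ objCtx L (objCtx R Γ')) C)
      (t₁ : M.Hom ((Γ ++ newCtx L []) ++ objCtx R Γ') C),
      HEq t₁ (isub Γ L (objCtx R Γ') t) →
      ∀ (t₂ : M.Hom ((Γ ++ objCtx L []) ++ objCtx R Γ') C), HEq t₂ t →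
      ∀ (t₃ : M.Hom (Γ ++ objCtx L (newCtx R Γ')) C),
      HEq t₃ (isub (Γ ++ objCtx L []) R Γ' t₂) →
      HEq (isub (Γ ++ newCtx L []) R Γ' t₁) (isub Γ L (newCtx R Γ') t₃) := by
  induction L with
  | nil =>
    intro _ R Γ Γ' C t t₁ h₁ t₂ h₂ t₃ h₃
    rw [isub_nil'] at h₁
    rw [isub_nil']
    exact (isub_hcongr rfl rfl (h₁.trans h₂.symm)).trans h₃.symm
  | cons s L' ih =>
    intro hL R Γ Γ' C t t₁ h₁ t₂ h₂ t₃ h₃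
    have hs : M.Central s.hom := hL s (by simp)
    have hL' : ∀ s' ∈ L', M.Central s'.hom := fun s' hs' => hL s' (by simp [hs'])
    obtain ⟨q, hq⟩ : ∃ q : M.Hom ((Γ ++ s.src) ++ objCtx L' (objCtx R Γ')) C,
        HEq q (M.subst Γ s.tgt (objCtx L' (objCtx R Γ')) t s.hom) :=
      ⟨M.cst (by simp) _, cst_heq _ _⟩
    have hcons : HEq (isub Γ (s :: L') (objCtx R Γ') t)
        (isub (Γ ++ s.src) L' (objCtx R Γ') q) := isub_cons _ _ _ _ hq
    -- ih inputs
    obtain ⟨q₁, hq₁⟩ : ∃ q₁ : M.Hom (((Γ ++ s.src) ++ newCtx L' []) ++ objCtx R Γ') C,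
        HEq q₁ t₁ := ⟨M.cst (by simp) _, cst_heq _ _⟩
    obtain ⟨q₂, hq₂⟩ : ∃ q₂ : M.Hom (((Γ ++ s.src) ++ objCtx L' []) ++ objCtx R Γ') C,
        HEq q₂ q := ⟨M.cst (by simp) _, cst_heq _ _⟩
    obtain ⟨q₃, hq₃⟩ : ∃ q₃ : M.Hom ((Γ ++ s.src) ++ objCtx L' (newCtx R Γ')) C,
        HEq q₃ (isub ((Γ ++ s.src) ++ objCtx L' []) R Γ' q₂) := ⟨M.cst (by simp) _, cst_heq _ _⟩
    have hih := ih hL' R (Γ ++ s.src) Γ' q q₁ (hq₁.trans (h₁.trans hcons)) q₂ hq₂ q₃ hq₃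
    refine HEq.trans (isub_hcongr (by simp) rfl hq₁.symm) (hih.trans ?_)
    -- commute subst s past isub R (CL with gap objCtx L' [])
    obtain ⟨T, hT⟩ : ∃ T : M.Hom (Γ ++ (s.tgt :: (objCtx L' [] ++ objCtx R Γ'))) C,
        HEq T t := ⟨M.cst (by simp) _, cst_heq _ _⟩
    obtain ⟨c₁, hc₁⟩ : ∃ c₁ : M.Hom ((Γ ++ (s.src ++ objCtx L' [])) ++ objCtx R Γ') C,
        HEq c₁ (M.subst Γ s.tgt (objCtx L' [] ++ objCtx R Γ') T s.hom) :=
      ⟨M.cst (by simp) _, cst_heq _ _⟩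
    obtain ⟨c₂, hc₂⟩ : ∃ c₂ : M.Hom ((Γ ++ (s.tgt :: objCtx L' [])) ++ objCtx R Γ') C,
        HEq c₂ T := ⟨M.cst (by simp) _, cst_heq _ _⟩
    obtain ⟨c₃, hc₃⟩ : ∃ c₃ : M.Hom (Γ ++ (s.tgt :: (objCtx L' [] ++ newCtx R Γ'))) C,
        HEq c₃ (isub (Γ ++ (s.tgt :: objCtx L' [])) R Γ' c₂) := ⟨M.cst (by simp) _, cst_heq _ _⟩
    have hCL := central_subst_isub hs Γ R (objCtx L' []) Γ' T c₁
      (hc₁.trans HEq.rfl) c₂ hc₂ c₃ hc₃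
    -- q₃ ≅ subst_s c₃
    have hq₃' : HEq q₃ (M.subst Γ s.tgt (objCtx L' [] ++ newCtx R Γ') c₃ s.hom) := by
      refine hq₃.trans ?_
      refine HEq.trans (isub_hcongr (by simp) rfl ?_) hCL
      exact hq₂.trans (hq.trans ((subst_hcongr rfl (by simp) hT.symm rfl HEq.rfl).trans hc₁.symm))
    obtain ⟨r, hr⟩ : ∃ r : M.Hom ((Γ ++ s.src) ++ objCtx L' (newCtx R Γ')) C,
        HEq r (M.subst Γ s.tgt (objCtx L' (newCtx R Γ')) t₃ s.hom) :=
      ⟨M.cst (by simp) _, cst_heq _ _⟩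
    refine HEq.trans ?_ (isub_cons _ _ _ _ hr).symm
    refine isub_hcongr rfl rfl ?_
    refine hq₃'.trans ?_
    refine HEq.trans (subst_hcongr rfl (by simp) ?_ rfl HEq.rfl) hr.symm
    -- HEq c₃ t₃
    refine hc₃.trans (HEq.trans ?_ h₃.symm)
    refine isub_hcongr (by simp) rfl ?_
    exact hc₂.trans (hT.trans h₂.symm)

/-- Statement 19 with no groups on the left of the distinguished one. -/
theorem key0 (gp : M.GSub) (G₂ : List M.GSub) :
    (∀ g ∈ G₂, M.Central g.hom) → (∀ g ∈ G₂, ∀ s ∈ g.inner, M.Central s.hom) →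
    ∀ (Γ Γ' : List M.Obj) {B : M.Obj}
      (t : M.Hom (Γ ++ objCtx ((gp :: G₂).map GSub.toOuter) Γ') B)
      (t₁ : M.Hom (Γ ++ objCtx ((gp :: G₂).map GSub.toCollapsed) Γ') B), HEq t₁ t →
      ∀ (t₂ : M.Hom (Γ ++ objCtx (((gp :: G₂).map GSub.inner).flatten) Γ') B),
      HEq t₂ (isub Γ ((gp :: G₂).map GSub.toOuter) Γ' t) →
      HEq (isub Γ ((gp :: G₂).map GSub.toCollapsed) Γ' t₁)
        (isub Γ (((gp :: G₂).map GSub.inner).flatten) Γ' t₂) := by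
  induction G₂ using List.reverseRecOn with
  | nil =>
    intro _ _ Γ Γ' B t t₁ h₁ t₂ h₂
    obtain ⟨W, hW⟩ : ∃ W : M.Hom ((Γ ++ newCtx ([] : List M.Sub) []) ++ (gp.tgt :: Γ')) B,
        HEq W (isub Γ ([] : List M.Sub) (gp.tgt :: Γ') t₁) := ⟨M.cst (by simp) _, cst_heq _ _⟩
    have hLhs : HEq (isub Γ ((gp :: ([] : List M.GSub)).map GSub.toCollapsed) Γ' t₁)
        (M.subst (Γ ++ newCtx ([] : List M.Sub) []) gp.tgt Γ' W
          (isub ([] : List M.Obj) gp.inner [] gp.hom)) :=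
      isub_snoc (L := ([] : List M.Sub)) HEq.rfl hW
    rw [isub_nil' (Γ' := gp.tgt :: Γ') t₁] at hW
    obtain ⟨T', hT'⟩ : ∃ T' : M.Hom ((Γ ++ newCtx ([] : List M.Sub) [])
          ++ objCtx gp.inner (([] : List M.Obj) ++ Γ')) B,
        HEq T' (M.subst (Γ ++ newCtx ([] : List M.Sub) []) gp.tgt Γ' W gp.hom) :=
      ⟨M.cst (by simp) _, cst_heq _ _⟩
    have hA := subst_isub W gp.inner [] gp.hom T' hT'
    refine hLhs.trans (hA.trans ?_)
    obtain ⟨W₂, hW₂⟩ : ∃ W₂ : M.Hom ((Γ ++ newCtx ([] : List M.Sub) []) ++ (gp.tgt :: Γ')) B,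
        HEq W₂ (isub Γ ([] : List M.Sub) (gp.tgt :: Γ') t) := ⟨M.cst (by simp) _, cst_heq _ _⟩
    have hO : HEq (isub Γ ((gp :: ([] : List M.GSub)).map GSub.toOuter) Γ' t)
        (M.subst (Γ ++ newCtx ([] : List M.Sub) []) gp.tgt Γ' W₂ gp.hom) :=
      isub_snoc (L := ([] : List M.Sub)) HEq.rfl hW₂
    rw [isub_nil' (Γ' := gp.tgt :: Γ') t] at hW₂
    refine isub_hcongr' (by simp) (by simp) rfl ?_
    refine hT'.trans ?_
    refine HEq.trans (subst_hcongr rfl rfl (hW.trans (h₁.trans hW₂.symm)) rfl HEq.rfl) ?_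
    exact hO.symm.trans h₂.symm
  | append_singleton G₂' g ih =>
    intro hc hi Γ Γ' B t t₁ h₁ t₂ h₂
    have hg : M.Central g.hom := hc g (by simp)
    have ih' := ih (fun g' hg' => hc g' (by simp [hg'])) (fun g' hg' => hi g' (by simp [hg']))
    -- abbreviations: C' := (gp::G₂').map toCollapsed, O' := (gp::G₂').map toOuter,
    -- F' := ((gp::G₂').map inner).flatten
    -- LHS
    obtain ⟨c₁, hc₁⟩ : ∃ c₁ : M.Hom (Γ ++ objCtx (((gp :: G₂').map GSub.toCollapsed)
          ++ [g.toCollapsed]) Γ') B, HEq c₁ t₁ := ⟨M.cst (by simp) _, cst_heq _ _⟩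
    have hL1 : HEq (isub Γ ((gp :: (G₂' ++ [g])).map GSub.toCollapsed) Γ' t₁)
        (isub Γ (((gp :: G₂').map GSub.toCollapsed) ++ [g.toCollapsed]) Γ' c₁) :=
      isub_hcongr' rfl (by simp) rfl hc₁.symm
    obtain ⟨a₁, ha₁⟩ : ∃ a₁ : M.Hom (Γ ++ objCtx ((gp :: G₂').map GSub.toCollapsed)
          (g.tgt :: Γ')) B, HEq a₁ c₁ := ⟨M.cst (by simp) _, cst_heq _ _⟩
    obtain ⟨W, hW⟩ : ∃ W : M.Hom ((Γ ++ newCtx ((gp :: G₂').map GSub.toCollapsed) [])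
          ++ (g.tgt :: Γ')) B,
        HEq W (isub Γ ((gp :: G₂').map GSub.toCollapsed) (g.tgt :: Γ') a₁) :=
      ⟨M.cst (by simp) _, cst_heq _ _⟩
    have hL2 : HEq (isub Γ (((gp :: G₂').map GSub.toCollapsed) ++ [g.toCollapsed]) Γ' c₁)
        (M.subst (Γ ++ newCtx ((gp :: G₂').map GSub.toCollapsed) []) g.tgt Γ' W
          (isub ([] : List M.Obj) g.inner [] g.hom)) :=
      isub_snoc ha₁.symm hW
    -- ih' on the inner part
    obtain ⟨aT, haT⟩ : ∃ aT : M.Hom (Γ ++ objCtx ((gp :: G₂').map GSub.toOuter)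
          (g.tgt :: Γ')) B, HEq aT a₁ := ⟨M.cst (by simp [Function.comp_def]) _, cst_heq _ _⟩
    obtain ⟨a₂, ha₂⟩ : ∃ a₂ : M.Hom (Γ ++ objCtx (((gp :: G₂').map GSub.inner).flatten)
          (g.tgt :: Γ')) B,
        HEq a₂ (isub Γ ((gp :: G₂').map GSub.toOuter) (g.tgt :: Γ') aT) :=
      ⟨M.cst (by simp [Function.comp_def, List.map_flatten]) _, cst_heq _ _⟩
    have hih := ih' Γ (g.tgt :: Γ') aT a₁ haT.symm a₂ ha₂
    -- Lemma A: pull g's inner substitutions out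
    obtain ⟨T', hT'⟩ : ∃ T' : M.Hom ((Γ ++ newCtx ((gp :: G₂').map GSub.toCollapsed) [])
          ++ objCtx g.inner (([] : List M.Obj) ++ Γ')) B,
        HEq T' (M.subst (Γ ++ newCtx ((gp :: G₂').map GSub.toCollapsed) []) g.tgt Γ' W
          g.hom) := ⟨M.cst (by simp) _, cst_heq _ _⟩
    have hA := subst_isub W g.inner [] g.hom T' hT'
    -- CR: commute subst g.hom past isub F'
    obtain ⟨x₁, hx₁⟩ : ∃ x₁ : M.Hom ((Γ ++ (newCtx (((gp :: G₂').map GSub.inner).flatten) []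
          ++ ([] : List M.Obj))) ++ (g.tgt :: Γ')) B, HEq x₁ W :=
      ⟨M.cst (by simp [Function.comp_def, List.map_flatten, List.flatten_flatten]) _,
        cst_heq _ _⟩
    obtain ⟨x₂, hx₂⟩ : ∃ x₂ : M.Hom ((Γ ++ (objCtx (((gp :: G₂').map GSub.inner).flatten) []
          ++ ([] : List M.Obj))) ++ (g.tgt :: Γ')) B, HEq x₂ a₂ :=
      ⟨M.cst (by simp) _, cst_heq _ _⟩
    obtain ⟨x₃, hx₃⟩ : ∃ x₃ : M.Hom (Γ ++ objCtx (((gp :: G₂').map GSub.inner).flatten)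
          (([] : List M.Obj) ++ (objCtx g.inner [] ++ Γ'))) B,
        HEq x₃ (M.subst (Γ ++ (objCtx (((gp :: G₂').map GSub.inner).flatten) []
          ++ ([] : List M.Obj))) g.tgt Γ' x₂ g.hom) := ⟨M.cst (by simp) _, cst_heq _ _⟩
    have hCR := isub_subst_central hg (((gp :: G₂').map GSub.inner).flatten) Γ [] Γ' a₂ x₁
      (hx₁.trans (hW.trans hih)) x₂ hx₂ x₃ hx₃
    -- RHS decomposition
    obtain ⟨o₁, ho₁⟩ : ∃ o₁ : M.Hom (Γ ++ objCtx (((gp :: G₂').map GSub.toOuter)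
          ++ [g.toOuter]) Γ') B, HEq o₁ t := ⟨M.cst (by simp) _, cst_heq _ _⟩
    have hR1 : HEq (isub Γ ((gp :: (G₂' ++ [g])).map GSub.toOuter) Γ' t)
        (isub Γ (((gp :: G₂').map GSub.toOuter) ++ [g.toOuter]) Γ' o₁) :=
      isub_hcongr' rfl (by simp) rfl ho₁.symm
    obtain ⟨zT, hzT⟩ : ∃ zT : M.Hom (Γ ++ objCtx ((gp :: G₂').map GSub.toOuter)
          (g.tgt :: Γ')) B, HEq zT o₁ := ⟨M.cst (by simp) _, cst_heq _ _⟩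
    obtain ⟨Z, hZ⟩ : ∃ Z : M.Hom ((Γ ++ newCtx ((gp :: G₂').map GSub.toOuter) [])
          ++ (g.tgt :: Γ')) B,
        HEq Z (isub Γ ((gp :: G₂').map GSub.toOuter) (g.tgt :: Γ') zT) :=
      ⟨M.cst (by simp) _, cst_heq _ _⟩
    have hR2 : HEq (isub Γ (((gp :: G₂').map GSub.toOuter) ++ [g.toOuter]) Γ' o₁)
        (M.subst (Γ ++ newCtx ((gp :: G₂').map GSub.toOuter) []) g.tgt Γ' Z g.hom) :=
      isub_snoc hzT.symm hZ
    obtain ⟨f₁, hf₁⟩ : ∃ f₁ : M.Hom (Γ ++ objCtx ((((gp :: G₂').map GSub.inner).flatten)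
          ++ g.inner) Γ') B, HEq f₁ t₂ := ⟨M.cst (by simp) _, cst_heq _ _⟩
    have hR3 : HEq (isub Γ (((gp :: (G₂' ++ [g])).map GSub.inner).flatten) Γ' t₂)
        (isub Γ ((((gp :: G₂').map GSub.inner).flatten) ++ g.inner) Γ' f₁) :=
      isub_hcongr' rfl (by simp) rfl hf₁.symm
    obtain ⟨f₂, hf₂⟩ : ∃ f₂ : M.Hom (Γ ++ objCtx (((gp :: G₂').map GSub.inner).flatten)
          (objCtx g.inner Γ')) B, HEq f₁ f₂ := ⟨M.cst (by simp) _, (cst_heq _ _).symm⟩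
    obtain ⟨f₃, hf₃⟩ : ∃ f₃ : M.Hom ((Γ ++ newCtx (((gp :: G₂').map GSub.inner).flatten) [])
          ++ objCtx g.inner Γ') B,
        HEq f₃ (isub Γ (((gp :: G₂').map GSub.inner).flatten) (objCtx g.inner Γ') f₂) :=
      ⟨M.cst (by simp) _, cst_heq _ _⟩
    have hR4 : HEq (isub Γ ((((gp :: G₂').map GSub.inner).flatten) ++ g.inner) Γ' f₁)
        (isub (Γ ++ newCtx (((gp :: G₂').map GSub.inner).flatten) []) g.inner Γ' f₃) :=
      isub_append _ _ _ _ _ _ hf₂ f₃ hf₃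
    -- assemble
    refine (hL1.trans (hL2.trans hA)).trans ?_
    refine HEq.trans ?_ (hR3.trans hR4).symm
    have hx₂Z : HEq x₂ Z := by
      refine hx₂.trans (ha₂.trans ?_)
      refine HEq.trans (isub_hcongr rfl rfl ?_) hZ.symm
      exact haT.trans (ha₁.trans (hc₁.trans (h₁.trans (ho₁.symm.trans hzT.symm))))
    have hx₃f₂ : HEq x₃ f₂ := by
      refine hx₃.trans ?_
      refine HEq.trans (subst_hcongr
        (by simp [Function.comp_def, List.map_flatten, List.flatten_flatten]) rfl hx₂Z rfl
        HEq.rfl) ?_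
      exact hR2.symm.trans (hR1.symm.trans (h₂.symm.trans (hf₁.symm.trans hf₂)))
    have hT'f₃ : HEq T' f₃ := by
      refine hT'.trans ?_
      refine HEq.trans (subst_hcongr
        (by simp [Function.comp_def, List.map_flatten, List.flatten_flatten]) rfl hx₁.symm rfl
        HEq.rfl) ?_
      refine hCR.trans ?_
      exact (isub_hcongr rfl (by simp) hx₃f₂).trans hf₃.symm
    exact isub_hcongr'
      (by simp [Function.comp_def, List.map_flatten, List.flatten_flatten]) rfl rfl hT'f₃

/-- Statement 19, heterogeneous form. -/
theorem key (gp : M.GSub) (G₂ : List M.GSub)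
    (hc₂ : ∀ g ∈ G₂, M.Central g.hom) (hi₂ : ∀ g ∈ G₂, ∀ s ∈ g.inner, M.Central s.hom)
    (G₁ : List M.GSub) :
    (∀ g ∈ G₁, M.Central g.hom) → (∀ g ∈ G₁, ∀ s ∈ g.inner, M.Central s.hom) →
    ∀ (Γ Γ' : List M.Obj) {B : M.Obj}
      (t : M.Hom (Γ ++ objCtx ((G₁ ++ gp :: G₂).map GSub.toOuter) Γ') B)
      (t₁ : M.Hom (Γ ++ objCtx ((G₁ ++ gp :: G₂).map GSub.toCollapsed) Γ') B), HEq t₁ t →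
      ∀ (t₂ : M.Hom (Γ ++ objCtx (((G₁ ++ gp :: G₂).map GSub.inner).flatten) Γ') B),
      HEq t₂ (isub Γ ((G₁ ++ gp :: G₂).map GSub.toOuter) Γ' t) →
      HEq (isub Γ ((G₁ ++ gp :: G₂).map GSub.toCollapsed) Γ' t₁)
        (isub Γ (((G₁ ++ gp :: G₂).map GSub.inner).flatten) Γ' t₂) := by
  induction G₁ with
  | nil =>
    intro _ _
    exact key0 gp G₂ hc₂ hi₂
  | cons g G₁' ih =>
    intro hcg hig Γ Γ' B t t₁ h₁ t₂ h₂
    have hg : M.Central g.hom := hcg g (by simp)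
    have hgi : ∀ s ∈ g.inner, M.Central s.hom := hig g (by simp)
    have ih' := ih (fun x hx => hcg x (by simp [hx])) (fun x hx => hig x (by simp [hx]))
    -- LHS: peel the head group
    obtain ⟨n₀, hn₀⟩ : ∃ n₀ : M.Hom ((Γ ++ newCtx g.inner [])
          ++ objCtx ((G₁' ++ gp :: G₂).map GSub.toCollapsed) Γ') B,
        HEq n₀ (M.subst Γ g.tgt (objCtx ((G₁' ++ gp :: G₂).map GSub.toCollapsed) Γ') t₁
          (isub ([] : List M.Obj) g.inner [] g.hom)) := ⟨M.cst (by simp) _, cst_heq _ _⟩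
    have hL1 : HEq (isub Γ ((g :: (G₁' ++ gp :: G₂)).map GSub.toCollapsed) Γ' t₁)
        (isub (Γ ++ newCtx g.inner []) ((G₁' ++ gp :: G₂).map GSub.toCollapsed) Γ' n₀) :=
      isub_cons _ _ _ _ hn₀
    obtain ⟨n₁, hn₁⟩ : ∃ n₁ : M.Hom (Γ ++ objCtx g.inner (([] : List M.Obj)
          ++ objCtx ((G₁' ++ gp :: G₂).map GSub.toCollapsed) Γ')) B,
        HEq n₁ (M.subst Γ g.tgt (objCtx ((G₁' ++ gp :: G₂).map GSub.toCollapsed) Γ') t₁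
          g.hom) := ⟨M.cst (by simp) _, cst_heq _ _⟩
    have hA := subst_isub t₁ g.inner [] g.hom n₁ hn₁
    -- ih'
    obtain ⟨tI, htI⟩ : ∃ tI : M.Hom ((Γ ++ newCtx g.inner [])
          ++ objCtx ((G₁' ++ gp :: G₂).map GSub.toOuter) Γ') B, HEq tI n₀ :=
      ⟨M.cst (by simp [Function.comp_def]) _, cst_heq _ _⟩
    obtain ⟨m₂, hm₂⟩ : ∃ m₂ : M.Hom ((Γ ++ newCtx g.inner [])
          ++ objCtx (((G₁' ++ gp :: G₂).map GSub.inner).flatten) Γ') B,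
        HEq m₂ (isub (Γ ++ newCtx g.inner []) ((G₁' ++ gp :: G₂).map GSub.toOuter) Γ' tI) :=
      ⟨M.cst (by simp [Function.comp_def, List.map_flatten]) _, cst_heq _ _⟩
    have hih := ih' (Γ ++ newCtx g.inner []) Γ' tI n₀ htI.symm m₂ hm₂
    -- RHS: peel the head group
    obtain ⟨r₁, hr₁⟩ : ∃ r₁ : M.Hom ((Γ ++ objCtx g.inner [])
          ++ objCtx ((G₁' ++ gp :: G₂).map GSub.toOuter) Γ') B,
        HEq r₁ (M.subst Γ g.tgt (objCtx ((G₁' ++ gp :: G₂).map GSub.toOuter) Γ') t g.hom) :=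
      ⟨M.cst (by simp) _, cst_heq _ _⟩
    have hR1 : HEq (isub Γ ((g :: (G₁' ++ gp :: G₂)).map GSub.toOuter) Γ' t)
        (isub (Γ ++ objCtx g.inner []) ((G₁' ++ gp :: G₂).map GSub.toOuter) Γ' r₁) :=
      isub_cons _ _ _ _ hr₁
    obtain ⟨f₁, hf₁⟩ : ∃ f₁ : M.Hom (Γ ++ objCtx (g.inner
          ++ ((G₁' ++ gp :: G₂).map GSub.inner).flatten) Γ') B, HEq f₁ t₂ :=
      ⟨M.cst (by simp) _, cst_heq _ _⟩
    have hR2 : HEq (isub Γ (((g :: (G₁' ++ gp :: G₂)).map GSub.inner).flatten) Γ' t₂)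
        (isub Γ (g.inner ++ ((G₁' ++ gp :: G₂).map GSub.inner).flatten) Γ' f₁) :=
      isub_hcongr' rfl (by simp) rfl hf₁.symm
    obtain ⟨f₂, hf₂⟩ : ∃ f₂ : M.Hom (Γ ++ objCtx g.inner
          (objCtx (((G₁' ++ gp :: G₂).map GSub.inner).flatten) Γ')) B, HEq f₁ f₂ :=
      ⟨M.cst (by simp) _, (cst_heq _ _).symm⟩
    obtain ⟨f₃, hf₃⟩ : ∃ f₃ : M.Hom ((Γ ++ newCtx g.inner [])
          ++ objCtx (((G₁' ++ gp :: G₂).map GSub.inner).flatten) Γ') B,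
        HEq f₃ (isub Γ g.inner
          (objCtx (((G₁' ++ gp :: G₂).map GSub.inner).flatten) Γ') f₂) :=
      ⟨M.cst (by simp) _, cst_heq _ _⟩
    have hR3 := isub_append g.inner Γ (((G₁' ++ gp :: G₂).map GSub.inner).flatten) Γ' f₁ f₂
      hf₂ f₃ hf₃
    -- Lemma E setup
    obtain ⟨eT, heT⟩ : ∃ eT : M.Hom (Γ ++ objCtx g.inner
          (objCtx ((G₁' ++ gp :: G₂).map GSub.toOuter) Γ')) B, HEq eT n₁ :=
      ⟨M.cst (by simp [Function.comp_def]) _, cst_heq _ _⟩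
    obtain ⟨e₁, he₁⟩ : ∃ e₁ : M.Hom ((Γ ++ newCtx g.inner [])
          ++ objCtx ((G₁' ++ gp :: G₂).map GSub.toOuter) Γ') B,
        HEq e₁ (isub Γ g.inner (objCtx ((G₁' ++ gp :: G₂).map GSub.toOuter) Γ') eT) :=
      ⟨M.cst (by simp) _, cst_heq _ _⟩
    obtain ⟨e₂, he₂⟩ : ∃ e₂ : M.Hom ((Γ ++ objCtx g.inner [])
          ++ objCtx ((G₁' ++ gp :: G₂).map GSub.toOuter) Γ') B, HEq e₂ eT :=
      ⟨M.cst (by simp) _, cst_heq _ _⟩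
    obtain ⟨e₃, he₃⟩ : ∃ e₃ : M.Hom (Γ ++ objCtx g.inner
          (newCtx ((G₁' ++ gp :: G₂).map GSub.toOuter) Γ')) B,
        HEq e₃ (isub (Γ ++ objCtx g.inner []) ((G₁' ++ gp :: G₂).map GSub.toOuter) Γ' e₂) :=
      ⟨M.cst (by simp) _, cst_heq _ _⟩
    have hE := isub_isub_swap g.inner hgi ((G₁' ++ gp :: G₂).map GSub.toOuter) Γ Γ' eT e₁
      he₁ e₂ he₂ e₃ he₃
    -- assemble
    refine (hL1.trans hih).trans ?_
    refine HEq.trans ?_ (hR2.trans hR3).symm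
    refine isub_hcongr rfl rfl ?_
    have hm₂e : HEq m₂ (isub Γ g.inner
        (newCtx ((G₁' ++ gp :: G₂).map GSub.toOuter) Γ') e₃) := by
      refine hm₂.trans ?_
      refine HEq.trans (isub_hcongr rfl rfl ?_) hE
      exact htI.trans (hn₀.trans (hA.trans
        ((isub_hcongr rfl (by simp [Function.comp_def]) heT.symm).trans he₁.symm)))
    refine hm₂e.trans ?_
    refine HEq.trans (isub_hcongr rfl (by simp [Function.comp_def, List.map_flatten]) ?_)
      hf₃.symm
    refine he₃.trans ?_
    refine HEq.trans (isub_hcongr rfl rfl ?_)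
      (hR1.symm.trans (h₂.symm.trans (hf₁.symm.trans hf₂)))
    exact he₂.trans (heT.trans (hn₁.trans
      ((subst_hcongr rfl (by simp [Function.comp_def]) h₁ rfl HEq.rfl).trans hr₁.symm)))

end PreMulticat

open PreMulticat in
/-- for `t : Γ,A₁,…,Aₙ,Γ' → B`, `uᵢ : Aᵢ¹,…,Aᵢ^{kᵢ} → Aᵢ` and `vᵢʲ : Δᵢʲ → Aᵢʲ`
(each `uᵢ` with its list of `vᵢʲ`'s recorded as a group; the groups listed as
`G₁ ++ gp :: G₂`, where `gp` is the distinguished `p`-th group), with `uᵢ` central for `i ≠ p`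
and `vᵢʲ` central for `i ≠ p` (while `u_p` and the `v_pʲ` may be arbitrary), one still has
`t⟨Γ, u₁⟨v₁¹,…⟩, …, uₙ⟨vₙ¹,…⟩, Γ'⟩ = t⟨Γ,u₁,…,uₙ,Γ'⟩⟨Γ, v₁¹,…,v₁^{k₁},…,vₙ^{kₙ}, Γ'⟩`. -/
theorem stmt_19 (M : PreMulticat.{u, v}) (Γ Γ' : List M.Obj) (G₁ G₂ : List M.GSub)
    (gp : M.GSub) {B : M.Obj}
    (t : M.Hom (Γ ++ objCtx ((G₁ ++ gp :: G₂).map GSub.toOuter) Γ') B)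
    (hu₁ : ∀ g ∈ G₁, M.Central g.hom) (hu₂ : ∀ g ∈ G₂, M.Central g.hom)
    (hv₁ : ∀ g ∈ G₁, ∀ s ∈ g.inner, M.Central s.hom)
    (hv₂ : ∀ g ∈ G₂, ∀ s ∈ g.inner, M.Central s.hom) :
    isub Γ ((G₁ ++ gp :: G₂).map GSub.toCollapsed) Γ' (M.cst (by simp [Function.comp_def]) t)
      = M.cst (by simp [Function.comp_def, List.map_flatten, List.flatten_flatten])
          (isub Γ (((G₁ ++ gp :: G₂).map GSub.inner).flatten) Γ'
            (M.cst (by simp [Function.comp_def, List.map_flatten])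
              (isub Γ ((G₁ ++ gp :: G₂).map GSub.toOuter) Γ' t))) := by
  apply eq_of_heq
  refine HEq.trans
    (key gp G₂ hu₂ hv₂ G₁ hu₁ hv₁ Γ Γ' t _ (cst_heq _ t) _ (cst_heq _ _))
    (cst_heq _ _).symm
end
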